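/- arXiv:1801.04716 — 8 statements merged into one kernel-verified Lean document; each statement's English description precedes it below -/
import Mathlib

section
/- Asymptotic variance of the MM regression estimator in the SUR model (Theorem 2, regression part). Let ρ₁ be a ρ-function with constant c₁, ψ₁ = ρ₁', w₁(u) = ψ₁(u)/u. Assume E_K[‖X̃‖²] < ∞, Ω := E_K[Xᵀ Σ⁻¹ X] is invertible, and η₁ := E[(1 − 1/m) w₁(‖E‖_Σ) + (1/m) ψ₁'(‖E‖_Σ)] ≠ 0. Define the influence function IF_β(x̃, y) = (1/η₁) w₁(‖y − xβ‖_Σ) Ω⁻¹ xᵀ Σ⁻¹ (y − xβ), where x is the block-diagonal arrangement of x̃. Then ∫ IF_β(x̃, y) IF_β(x̃, y)ᵀ dH(x̃, y) = (α₁/(m η₁²)) Ω⁻¹, where α₁ := E[ψ₁(‖E‖_Σ)²]. -/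
open MeasureTheory Matrix

noncomputable section

/-- The index set of the stacked coefficient vector of a SUR model with `m` blocks. -/
abbrev SURIdx (m : ℕ) (pdim : Fin m → ℕ) : Type := (j : Fin m) × Fin (pdim j)

/-- A ρ-function with tuning constant `c`. -/
def IsRhoFunction (ρ : ℝ → ℝ) (c : ℝ) : Prop :=
  0 < c ∧ (∀ u, ρ (-u) = ρ u) ∧ ContDiff ℝ 2 ρ ∧ ρ 0 = 0 ∧
    StrictMonoOn ρ (Set.Icc 0 c) ∧ ∀ u, c ≤ u → ρ u = ρ c

/-- `‖a‖_C = √(aᵀ C⁻¹ a)`. -/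
def mnorm {m : ℕ} (C : Matrix (Fin m) (Fin m) ℝ) (a : Fin m → ℝ) : ℝ :=
  Real.sqrt (a ⬝ᵥ C⁻¹.mulVec a)

/-- The `m × p` block-diagonal arrangement of a regressor vector. -/
def blockArrange {m : ℕ} {pdim : Fin m → ℕ} (x : SURIdx m pdim → ℝ) :
    Matrix (Fin m) (SURIdx m pdim) ℝ :=
  Matrix.of fun j q => if q.1 = j then x q else 0

/-- Orthogonal invariance of a measure on `ℝ^m`. -/
def OrthoInvariant {m : ℕ} (μ : Measure (Fin m → ℝ)) : Prop :=
  ∀ O : Matrix (Fin m) (Fin m) ℝ, Oᵀ * O = 1 → μ.map O.mulVec = μ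

/-!
Write `E = A Z` with `Σ = A Aᵀ`. Then `‖E‖_Σ = |Z|`, and at `(x̃, Xβ + A Z)` the influence
function is `η₁⁻¹ w₁(|Z|) L(x̃) Z` with `L = Ω⁻¹ Xᵀ Σ⁻¹ A`. Since `X̃` and `Z` are independent,
each entry of the second moment of `IF_β` factors into `E_K[L_{qk} L_{rl}]` times
`E[w₁(|Z|)² Z_k Z_l] / η₁²`. Orthogonal invariance of `Z` (sign flips and coordinate swaps) makes
the latter `δ_{kl} E[w₁(|Z|)² |Z|²] / (m η₁²) = δ_{kl} α₁ / (m η₁²)`, because `w₁(u) u = ψ₁(u)`.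
What remains is `E_K[L Lᵀ] = Ω⁻¹ E_K[Xᵀ Σ⁻¹ X] Ω⁻¹ = Ω⁻¹`.
-/

namespace IsRhoFunction

variable {ρ : ℝ → ℝ} {c : ℝ}

theorem continuous_deriv (h : IsRhoFunction ρ c) : Continuous (deriv ρ) :=
  (h.2.2.1.iterate_deriv' 1 1).continuous

theorem deriv_zero (h : IsRhoFunction ρ c) : deriv ρ 0 = 0 := by
  have h_neg := deriv_comp_neg ρ 0
  rw [show (fun x => ρ (-x)) = ρ from funext h.2.1, neg_zero] at h_neg
  linarith

theorem deriv_eq_zero_of_lt (h : IsRhoFunction ρ c) {u : ℝ} (hu : c < u) : deriv ρ u = 0 := by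
  have h_const : ρ =ᶠ[nhds u] fun _ => ρ c := by
    filter_upwards [Ioi_mem_nhds hu] with t ht using h.2.2.2.2.2 t ht.le
  rw [h_const.deriv_eq, deriv_const]

theorem exists_abs_deriv_le (h : IsRhoFunction ρ c) : ∃ C, ∀ u, 0 ≤ u → |deriv ρ u| ≤ C := by
  obtain ⟨C, hC⟩ := (isCompact_Icc (a := 0) (b := c)).exists_bound_of_continuousOn
    h.continuous_deriv.continuousOn
  refine ⟨max C 0, fun u hu => ?_⟩
  rcases le_or_gt u c with huc | huc
  · exact (hC u ⟨hu, huc⟩).trans (le_max_left _ _)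
  · simp [h.deriv_eq_zero_of_lt huc]

theorem integrable_deriv_comp_sq {β : Type*} [MeasurableSpace β] {μ : Measure β}
    [IsFiniteMeasure μ] (h : IsRhoFunction ρ c) {f : β → ℝ} (hf : Measurable f)
    (hf0 : ∀ x, 0 ≤ f x) : Integrable (fun x => deriv ρ (f x) ^ 2) μ := by
  obtain ⟨C, hC⟩ := h.exists_abs_deriv_le
  refine Integrable.of_bound
    ((h.continuous_deriv.measurable.comp hf).pow_const 2).aestronglyMeasurable (C ^ 2)
    (ae_of_all _ fun x => ?_)
  rw [norm_pow, Real.norm_eq_abs]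
  exact pow_le_pow_left₀ (abs_nonneg _) (hC _ (hf0 x)) 2

end IsRhoFunction

theorem measurable_of_eq_div_of_ne_zero {ψ w : ℝ → ℝ} (hψ : Measurable ψ)
    (hw : ∀ u, u ≠ 0 → w u = ψ u / u) : Measurable w := by
  have h_ite : w = fun u => if u = 0 then w 0 else ψ u / u := by
    funext u
    split_ifs with hu
    · rw [hu]
    · exact hw u hu
  rw [h_ite]
  exact Measurable.ite (measurableSet_singleton 0) measurable_const (hψ.div measurable_id)

theorem mul_eq_of_eq_div_of_ne_zero {ψ w : ℝ → ℝ} (hψ : ψ 0 = 0)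
    (hw : ∀ u, u ≠ 0 → w u = ψ u / u) (u : ℝ) : w u * u = ψ u := by
  rcases eq_or_ne u 0 with rfl | hu
  · simp [hψ]
  · rw [hw u hu, div_mul_cancel₀ _ hu]

namespace Matrix

variable {n : Type*} [Fintype n]

/-- Also true for singular `A`, where `A⁻¹ = 0`. -/
theorem nonsing_inv_mul_mul_nonsing_inv [DecidableEq n] (A : Matrix n n ℝ) :
    A⁻¹ * A * A⁻¹ = A⁻¹ := by
  by_cases hA : IsUnit A.det
  · rw [nonsing_inv_mul _ hA, Matrix.one_mul]
  · simp [nonsing_inv_apply_not_isUnit _ hA]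

theorem transpose_eq_of_mul_transpose_eq {S A : Matrix n n ℝ} (hA : A * Aᵀ = S) : Sᵀ = S := by
  rw [← hA, transpose_mul, transpose_transpose]

theorem transpose_mul_inv_mul_of_mul_transpose_eq [DecidableEq n] {S A : Matrix n n ℝ}
    (hS : IsUnit S.det) (hA : A * Aᵀ = S) : Aᵀ * S⁻¹ * A = 1 := by
  have hA_unit : IsUnit A.det := by
    rw [← hA, det_mul] at hS
    exact isUnit_of_mul_isUnit_left hS
  rw [← hA, Matrix.mul_inv_rev, ← Matrix.mul_assoc,
    mul_nonsing_inv _ (by rwa [det_transpose]), Matrix.one_mul, nonsing_inv_mul _ hA_unit]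

theorem inv_mul_mul_transpose_of_mul_transpose_eq [DecidableEq n] {S A : Matrix n n ℝ}
    (hA : A * Aᵀ = S) : S⁻¹ * A * (S⁻¹ * A)ᵀ = S⁻¹ := by
  rw [transpose_mul, transpose_nonsing_inv, transpose_eq_of_mul_transpose_eq hA,
    ← Matrix.mul_assoc, Matrix.mul_assoc _ A, hA, nonsing_inv_mul_mul_nonsing_inv]

theorem mul_mul_mul_transpose_of_mul_transpose_eq {k : Type*} [Fintype k] {P : Matrix n n ℝ}
    (hP : Pᵀ = P) {B S : Matrix k k ℝ} (hB : B * Bᵀ = S) (N : Matrix k n ℝ) :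
    P * Nᵀ * B * (P * Nᵀ * B)ᵀ = P * (Nᵀ * S * N) * P := by
  rw [← hB]
  simp only [transpose_mul, transpose_transpose, hP, Matrix.mul_assoc]

theorem dotProduct_self_nonneg (z : n → ℝ) : 0 ≤ z ⬝ᵥ z :=
  dotProduct_star_self_nonneg z

theorem dotProduct_mulVec_self_of_transpose_mul_eq_one [DecidableEq n] {O : Matrix n n ℝ}
    (hO : Oᵀ * O = 1) (z : n → ℝ) : (O *ᵥ z) ⬝ᵥ (O *ᵥ z) = z ⬝ᵥ z := by
  rw [dotProduct_mulVec, ← mulVec_transpose, mulVec_mulVec, hO, one_mulVec]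

theorem sq_le_dotProduct_self (z : n → ℝ) (k : n) : z k ^ 2 ≤ z ⬝ᵥ z := by
  rw [sq]
  exact Finset.single_le_sum (fun i _ => mul_self_nonneg (z i)) (Finset.mem_univ k)

theorem abs_mul_le_dotProduct_self (z : n → ℝ) (k l : n) : |z k * z l| ≤ z ⬝ᵥ z := by
  refine abs_le_of_sq_le_sq ?_ (dotProduct_self_nonneg z)
  rw [mul_pow, sq (z ⬝ᵥ z)]
  exact mul_le_mul (sq_le_dotProduct_self z k) (sq_le_dotProduct_self z l) (sq_nonneg _)
    (dotProduct_self_nonneg z)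

end Matrix

theorem integrable_radial_mul_coord {ι : Type*} [Fintype ι] {ν : Measure (ι → ℝ)}
    {g : ℝ → ℝ} (hg : Measurable g) (hint : Integrable (fun z => g (z ⬝ᵥ z) * (z ⬝ᵥ z)) ν)
    (k l : ι) : Integrable (fun z => g (z ⬝ᵥ z) * (z k * z l)) ν := by
  have h_dot : Measurable fun z : ι → ℝ => z ⬝ᵥ z :=
    (continuous_id.dotProduct continuous_id).measurable
  refine hint.mono (by fun_prop) (Filter.Eventually.of_forall fun z => ?_)
  rw [Real.norm_eq_abs, Real.norm_eq_abs, abs_mul, abs_mul (g _),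
    abs_of_nonneg (dotProduct_self_nonneg z)]
  exact mul_le_mul_of_nonneg_left (abs_mul_le_dotProduct_self z k l) (abs_nonneg _)

namespace OrthoInvariant

variable {m : ℕ} {ν : Measure (Fin m → ℝ)} {g : ℝ → ℝ}

theorem integral_comp_mulVec (hν : OrthoInvariant ν) {O : Matrix (Fin m) (Fin m) ℝ}
    (hO : Oᵀ * O = 1) {f : (Fin m → ℝ) → ℝ} (hf : AEStronglyMeasurable f ν) :
    ∫ z, f (O *ᵥ z) ∂ν = ∫ z, f z ∂ν := by
  have h_map := hν O hO
  have h_cont : Continuous O.mulVec := continuous_const.matrix_mulVec continuous_id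
  calc ∫ z, f (O *ᵥ z) ∂ν = ∫ z, f z ∂(ν.map O.mulVec) :=
        (integral_map h_cont.aemeasurable (by rwa [h_map])).symm
    _ = ∫ z, f z ∂ν := by rw [h_map]

theorem integral_radial_mul_mulVec_coord (hν : OrthoInvariant ν) (hg : Measurable g)
    {O : Matrix (Fin m) (Fin m) ℝ} (hO : Oᵀ * O = 1) (k l : Fin m) :
    ∫ z, g (z ⬝ᵥ z) * ((O *ᵥ z) k * (O *ᵥ z) l) ∂ν = ∫ z, g (z ⬝ᵥ z) * (z k * z l) ∂ν := by
  have h_meas : Measurable fun z : Fin m → ℝ => g (z ⬝ᵥ z) * (z k * z l) := by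
    have : Measurable fun z : Fin m → ℝ => z ⬝ᵥ z :=
      (continuous_id.dotProduct continuous_id).measurable
    fun_prop
  conv_rhs => rw [← hν.integral_comp_mulVec hO h_meas.aestronglyMeasurable]
  simp only [dotProduct_mulVec_self_of_transpose_mul_eq_one hO]

theorem integral_radial_mul_coord_of_ne (hν : OrthoInvariant ν) (hg : Measurable g)
    {k l : Fin m} (hkl : k ≠ l) : ∫ z, g (z ⬝ᵥ z) * (z k * z l) ∂ν = 0 := by
  set ε : Fin m → ℝ := fun i => if i = k then -1 else 1
  have hO : (diagonal ε)ᵀ * diagonal ε = 1 := by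
    rw [diagonal_transpose, diagonal_mul_diagonal, ← diagonal_one]
    congr 1
    funext i
    by_cases hi : i = k <;> simp [ε, hi]
  have h_flip := hν.integral_radial_mul_mulVec_coord hg hO k l
  simp only [mulVec_diagonal, ε, ↓reduceIte, if_neg hkl.symm, one_mul, neg_mul,
    mul_neg, integral_neg] at h_flip
  linarith

theorem integral_radial_mul_coord_self_eq (hν : OrthoInvariant ν) (hg : Measurable g)
    (k l : Fin m) : ∫ z, g (z ⬝ᵥ z) * (z k * z k) ∂ν = ∫ z, g (z ⬝ᵥ z) * (z l * z l) ∂ν := by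
  set σ := Equiv.swap k l
  have hO : (σ.permMatrix ℝ)ᵀ * σ.permMatrix ℝ = 1 := by
    rw [transpose_permMatrix, ← permMatrix_mul, mul_inv_cancel, permMatrix_one]
  rw [← hν.integral_radial_mul_mulVec_coord hg hO k k]
  simp [permMatrix_mulVec, σ]

theorem integral_radial_mul_coord (hν : OrthoInvariant ν) (hg : Measurable g)
    (hint : Integrable (fun z => g (z ⬝ᵥ z) * (z ⬝ᵥ z)) ν) (k l : Fin m) :
    ∫ z, g (z ⬝ᵥ z) * (z k * z l) ∂ν =
      if k = l then (∫ z, g (z ⬝ᵥ z) * (z ⬝ᵥ z) ∂ν) / m else 0 := by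
  split_ifs with hkl
  · subst hkl
    have h_sum : ∫ z, g (z ⬝ᵥ z) * (z ⬝ᵥ z) ∂ν =
        ∑ i : Fin m, ∫ z, g (z ⬝ᵥ z) * (z i * z i) ∂ν := by
      rw [← integral_finsetSum _ fun i _ => integrable_radial_mul_coord hg hint i i]
      simp only [dotProduct, Finset.mul_sum]
    have hm : (m : ℝ) ≠ 0 := Nat.cast_ne_zero.mpr (Fin.pos k).ne'
    simp only [h_sum, fun i => hν.integral_radial_mul_coord_self_eq hg i k, Finset.sum_const,
      Finset.card_univ, Fintype.card_fin, nsmul_eq_mul]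
    field_simp
  · exact hν.integral_radial_mul_coord_of_ne hg hkl

end OrthoInvariant

section EntrywiseIntegral

variable {α : Type*} [MeasurableSpace α] {μ : Measure α} {l n n' l' : Type*} [Fintype n]

theorem memLp_mul_mul_apply [Fintype n'] {p : ENNReal} {N : α → Matrix n n' ℝ}
    (hN : ∀ a b, MemLp (fun x => N x a b) p μ) (P : Matrix l n ℝ) (Q : Matrix n' l' ℝ)
    (i : l) (j : l') : MemLp (fun x => (P * N x * Q) i j) p μ := by
  simp only [mul_apply, Finset.sum_mul]
  exact memLp_finsetSum _ fun b _ => memLp_finsetSum _ fun a _ =>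
    ((hN a b).const_mul (P i a)).mul_const (Q b j)

theorem integral_mul_mul_apply [Fintype n'] {N : α → Matrix n n' ℝ}
    (hN : ∀ a b, Integrable (fun x => N x a b) μ) (P : Matrix l n ℝ) (Q : Matrix n' l' ℝ)
    (i : l) (j : l') :
    ∫ x, (P * N x * Q) i j ∂μ = (P * Matrix.of (fun a b => ∫ x, N x a b ∂μ) * Q) i j := by
  simp only [mul_apply, of_apply, Finset.sum_mul]
  rw [integral_finsetSum _ fun b _ => integrable_finsetSum _ fun a _ =>
    ((hN a b).const_mul (P i a)).mul_const (Q b j)]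
  refine Finset.sum_congr rfl fun b _ => ?_
  rw [integral_finsetSum _ fun a _ => ((hN a b).const_mul (P i a)).mul_const (Q b j)]
  simp only [integral_mul_const, integral_const_mul]

theorem integrable_transpose_mul_mul_apply {N : α → Matrix n n' ℝ}
    (hN : ∀ c a, MemLp (fun x => N x c a) 2 μ) (S : Matrix n n ℝ) (a b : n') :
    Integrable (fun x => ((N x)ᵀ * S * N x) a b) μ := by
  simp only [mul_apply, transpose_apply, Finset.sum_mul]
  exact integrable_finsetSum _ fun d _ => integrable_finsetSum _ fun c _ =>
    ((hN c a).mul_const (S c d)).integrable_mul (hN d b)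

theorem transpose_of_integral_transpose_mul_mul {N : α → Matrix n n' ℝ} {S : Matrix n n ℝ}
    (hS : Sᵀ = S) :
    (Matrix.of fun a b => ∫ x, ((N x)ᵀ * S * N x) a b ∂μ)ᵀ =
      Matrix.of fun a b => ∫ x, ((N x)ᵀ * S * N x) a b ∂μ := by
  ext a b
  simp only [transpose_apply, of_apply]
  congr 1
  funext x
  rw [← transpose_apply ((N x)ᵀ * S * N x), transpose_mul, transpose_mul, transpose_transpose,
    hS, Matrix.mul_assoc]

end EntrywiseIntegral

theorem integral_prod_mul_mulVec_apply_mul_mulVec_apply {α ι n : Type*} [MeasurableSpace α]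
    [Fintype ι] [DecidableEq ι] {K : Measure α} [SFinite K] {ν : Measure (ι → ℝ)} [SFinite ν]
    {L : α → Matrix n ι ℝ} (hL : ∀ i k, MemLp (fun x => L x i k) 2 K)
    {G : (ι → ℝ) → ℝ} (hG : ∀ k l, Integrable (fun z => G z * (z k * z l)) ν) {s : ℝ}
    (hGs : ∀ k l, ∫ z, G z * (z k * z l) ∂ν = if k = l then s else 0) (i j : n) :
    ∫ p, G p.2 * ((L p.1 *ᵥ p.2) i * (L p.1 *ᵥ p.2) j) ∂(K.prod ν) =
      s * ∫ x, (L x * (L x)ᵀ) i j ∂K := by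
  have hLL : ∀ k l, Integrable (fun x => L x i k * L x j l) K := fun k l =>
    (hL i k).integrable_mul (hL j l)
  have h_expand : ∀ p : α × (ι → ℝ), G p.2 * ((L p.1 *ᵥ p.2) i * (L p.1 *ᵥ p.2) j) =
      ∑ k, ∑ l, (L p.1 i k * L p.1 j l) * (G p.2 * (p.2 k * p.2 l)) := by
    intro p
    simp only [mulVec, dotProduct]
    rw [Finset.sum_mul_sum, Finset.mul_sum]
    refine Finset.sum_congr rfl fun k _ => ?_
    rw [Finset.mul_sum]
    exact Finset.sum_congr rfl fun l _ => by ring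
  simp_rw [h_expand]
  rw [integral_finsetSum _ fun k _ => integrable_finsetSum _ fun l _ =>
    (hLL k l).mul_prod (hG k l)]
  simp_rw [mul_apply, transpose_apply]
  rw [integral_finsetSum _ fun k _ => hLL k k, Finset.mul_sum]
  refine Finset.sum_congr rfl fun k _ => ?_
  rw [integral_finsetSum _ fun l _ => (hLL k l).mul_prod (hG k l),
    Finset.sum_congr rfl fun l _ =>
      integral_prod_mul (fun x => L x i k * L x j l) (fun z => G z * (z k * z l))]
  simp only [hGs, mul_ite, mul_zero, Finset.sum_ite_eq, Finset.mem_univ, if_true, mul_comm s]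

theorem integral_map_prod_map_right {α β γ δ : Type*} [MeasurableSpace α] [MeasurableSpace β]
    [MeasurableSpace γ] [MeasurableSpace δ] {μ : Measure α} [SFinite μ] {ν : Measure β}
    [SFinite ν] {g : β → γ} (hg : Measurable g) {h : α × γ → δ} (hh : Measurable h)
    {f : δ → ℝ} (hf : Measurable f) :
    ∫ y, f y ∂((μ.prod (ν.map g)).map h) = ∫ p, f (h (p.1, g p.2)) ∂(μ.prod ν) := by
  have h_prod : μ.prod (ν.map g) = (μ.prod ν).map (Prod.map id g) := by
    simpa using Measure.map_prod_map μ ν measurable_id hg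
  rw [h_prod, Measure.map_map hh (measurable_id.prodMap hg),
    integral_map (hh.comp (measurable_id.prodMap hg)).aemeasurable hf.aestronglyMeasurable]
  rfl

section SUR

variable {m : ℕ} {pdim : Fin m → ℕ}

theorem continuous_mnorm (S : Matrix (Fin m) (Fin m) ℝ) : Continuous (mnorm S) :=
  Real.continuous_sqrt.comp
    (continuous_id.dotProduct (continuous_const.matrix_mulVec continuous_id))

theorem mnorm_mulVec_of_mul_transpose_eq {S A : Matrix (Fin m) (Fin m) ℝ}
    (hS : IsUnit S.det) (hA : A * Aᵀ = S) (z : Fin m → ℝ) :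
    mnorm S (A *ᵥ z) = √(z ⬝ᵥ z) := by
  rw [mnorm, mulVec_mulVec, dotProduct_mulVec, ← mulVec_transpose, mulVec_mulVec, transpose_mul,
    transpose_nonsing_inv, transpose_eq_of_mul_transpose_eq hA,
    transpose_mul_inv_mul_of_mul_transpose_eq hS hA, one_mulVec]

theorem integral_comp_mnorm_map_mulVec {S A : Matrix (Fin m) (Fin m) ℝ} (hS : IsUnit S.det)
    (hA : A * Aᵀ = S) {ν : Measure (Fin m → ℝ)} {g : ℝ → ℝ} (hg : Measurable g) :
    ∫ e, g (mnorm S e) ∂(ν.map A.mulVec) = ∫ z, g √(z ⬝ᵥ z) ∂ν := by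
  have h_cont : Continuous A.mulVec := continuous_const.matrix_mulVec continuous_id
  rw [integral_map (f := fun e => g (mnorm S e)) h_cont.aemeasurable
    (hg.comp (continuous_mnorm S).measurable).aestronglyMeasurable]
  simp only [mnorm_mulVec_of_mul_transpose_eq hS hA]

theorem continuous_blockArrange :
    Continuous (blockArrange : (SURIdx m pdim → ℝ) → Matrix (Fin m) (SURIdx m pdim) ℝ) :=
  continuous_pi fun j => continuous_pi fun q => by
    simp only [blockArrange, of_apply]
    split_ifs
    exacts [continuous_apply q, continuous_const]

theorem memLp_blockArrange_apply {K : Measure (SURIdx m pdim → ℝ)}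
    (hK2 : Integrable (fun x => ∑ q, x q ^ 2) K) (j : Fin m) (q : SURIdx m pdim) :
    MemLp (fun x => blockArrange x j q) 2 K := by
  simp only [blockArrange, of_apply]
  split_ifs
  · refine (memLp_two_iff_integrable_sq (continuous_apply q).aestronglyMeasurable).2 ?_
    refine hK2.mono ((continuous_apply q).pow 2).aestronglyMeasurable (ae_of_all _ fun x => ?_)
    rw [Real.norm_eq_abs, Real.norm_eq_abs, abs_of_nonneg (sq_nonneg _),
      abs_of_nonneg (Finset.sum_nonneg fun _ _ => sq_nonneg _)]
    exact Finset.single_le_sum (fun i _ => sq_nonneg (x i)) (Finset.mem_univ q)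
  · exact MemLp.zero

theorem integral_sur_law {K : Measure (SURIdx m pdim → ℝ)} [SFinite K]
    {ν : Measure (Fin m → ℝ)} [SFinite ν] (A : Matrix (Fin m) (Fin m) ℝ)
    (β : SURIdx m pdim → ℝ) {f : (SURIdx m pdim → ℝ) × (Fin m → ℝ) → ℝ} (hf : Measurable f) :
    ∫ zy, f zy ∂((K.prod (ν.map A.mulVec)).map fun q => (q.1, blockArrange q.1 *ᵥ β + q.2)) =
      ∫ p, f (p.1, blockArrange p.1 *ᵥ β + A *ᵥ p.2) ∂(K.prod ν) :=
  integral_map_prod_map_right (continuous_const.matrix_mulVec continuous_id).measurable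
    (continuous_fst.prodMk (((continuous_blockArrange.comp continuous_fst).matrix_mulVec
      continuous_const).add continuous_snd)).measurable hf

theorem measurable_sur_influence {w : ℝ → ℝ} (hw : Measurable w)
    (S : Matrix (Fin m) (Fin m) ℝ) (β : SURIdx m pdim → ℝ) (a : ℝ)
    (P : Matrix (SURIdx m pdim) (SURIdx m pdim) ℝ) :
    Measurable fun zy : (SURIdx m pdim → ℝ) × (Fin m → ℝ) =>
      (a * w (mnorm S (zy.2 - blockArrange zy.1 *ᵥ β))) •
        (P *ᵥ ((blockArrange zy.1)ᵀ *ᵥ (S⁻¹ *ᵥ (zy.2 - blockArrange zy.1 *ᵥ β)))) := by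
  have hX : Continuous fun zy : (SURIdx m pdim → ℝ) × (Fin m → ℝ) => blockArrange zy.1 :=
    continuous_blockArrange.comp continuous_fst
  have he : Continuous fun zy : (SURIdx m pdim → ℝ) × (Fin m → ℝ) =>
      zy.2 - blockArrange zy.1 *ᵥ β :=
    continuous_snd.sub (hX.matrix_mulVec continuous_const)
  exact (measurable_const.mul (hw.comp ((continuous_mnorm S).comp he).measurable)).smul
    (continuous_const.matrix_mulVec
      (hX.matrix_transpose.matrix_mulVec (continuous_const.matrix_mulVec he))).measurable

end SUR

namespace IsRhoFunction

variable {ρ w : ℝ → ℝ} {c : ℝ}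

theorem weight_sq_mul_self (hρ : IsRhoFunction ρ c) (hw : ∀ u, u ≠ 0 → w u = deriv ρ u / u)
    (a : ℝ) {t : ℝ} (ht : 0 ≤ t) : (a * w √t) ^ 2 * t = a ^ 2 * deriv ρ √t ^ 2 := by
  calc (a * w √t) ^ 2 * t = a ^ 2 * (w √t * √t) ^ 2 := by
        rw [mul_pow _ √t, Real.sq_sqrt ht]; ring
    _ = a ^ 2 * deriv ρ √t ^ 2 := by rw [mul_eq_of_eq_div_of_ne_zero hρ.deriv_zero hw]

theorem measurable_weight_sq (hρ : IsRhoFunction ρ c) (hw : ∀ u, u ≠ 0 → w u = deriv ρ u / u)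
    (a : ℝ) : Measurable fun t => (a * w √t) ^ 2 := by
  have := measurable_of_eq_div_of_ne_zero hρ.continuous_deriv.measurable hw
  fun_prop

variable {m : ℕ} {ν : Measure (Fin m → ℝ)} [IsFiniteMeasure ν]

theorem integrable_weight_sq_mul_dotProduct (hρ : IsRhoFunction ρ c)
    (hw : ∀ u, u ≠ 0 → w u = deriv ρ u / u) (a : ℝ) :
    Integrable (fun z => (a * w √(z ⬝ᵥ z)) ^ 2 * (z ⬝ᵥ z)) ν := by
  have h_norm : Measurable fun z : Fin m → ℝ => √(z ⬝ᵥ z) :=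
    (continuous_id.dotProduct continuous_id).measurable.sqrt
  refine ((hρ.integrable_deriv_comp_sq h_norm fun _ => Real.sqrt_nonneg _).const_mul
    (a ^ 2)).congr (ae_of_all _ fun z => ?_)
  exact (hρ.weight_sq_mul_self hw a (dotProduct_self_nonneg z)).symm

theorem integral_weight_sq_mul_coord (hρ : IsRhoFunction ρ c)
    (hw : ∀ u, u ≠ 0 → w u = deriv ρ u / u) (hν : OrthoInvariant ν) (a : ℝ) (k l : Fin m) :
    ∫ z, (a * w √(z ⬝ᵥ z)) ^ 2 * (z k * z l) ∂ν =
      if k = l then a ^ 2 * (∫ z, deriv ρ √(z ⬝ᵥ z) ^ 2 ∂ν) / m else 0 := by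
  rw [hν.integral_radial_mul_coord (g := fun t => (a * w √t) ^ 2)
    (hρ.measurable_weight_sq hw a) (hρ.integrable_weight_sq_mul_dotProduct hw a)]
  simp only [fun z : Fin m → ℝ => hρ.weight_sq_mul_self hw a (dotProduct_self_nonneg z),
    integral_const_mul]

end IsRhoFunction

theorem asymptotic_variance_MM_regression_general
    {m : ℕ} {pdim : Fin m → ℕ}
    (ρ₁ : ℝ → ℝ) (c₁ : ℝ) (hρ₁ : IsRhoFunction ρ₁ c₁)
    (w₁ : ℝ → ℝ) (hw₁ : ∀ u : ℝ, u ≠ 0 → w₁ u = deriv ρ₁ u / u)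
    (K : Measure (SURIdx m pdim → ℝ)) [IsProbabilityMeasure K]
    (hK2 : Integrable (fun x => ∑ q, (x q) ^ 2) K)
    (Sig : Matrix (Fin m) (Fin m) ℝ) (hSig : Sig.PosDef)
    (β : SURIdx m pdim → ℝ)
    (ν : Measure (Fin m → ℝ)) [IsProbabilityMeasure ν] (hν : OrthoInvariant ν)
    (A : Matrix (Fin m) (Fin m) ℝ) (hA : A * Aᵀ = Sig)
    (F : Measure (Fin m → ℝ)) (hF : F = ν.map A.mulVec)
    (H : Measure ((SURIdx m pdim → ℝ) × (Fin m → ℝ)))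
    (hH : H = (K.prod F).map fun q => (q.1, (blockArrange q.1).mulVec β + q.2))
    -- Ω = E_K[Xᵀ Σ⁻¹ X], assumed invertible
    (Ω : Matrix (SURIdx m pdim) (SURIdx m pdim) ℝ)
    (hΩ : Ω = Matrix.of fun q r =>
      ∫ x, ((blockArrange x)ᵀ * Sig⁻¹ * blockArrange x) q r ∂K)
    (η₁ : ℝ)
    -- the influence function IF_β
    (IFβ : (SURIdx m pdim → ℝ) × (Fin m → ℝ) → SURIdx m pdim → ℝ)
    (hIF : ∀ zy : (SURIdx m pdim → ℝ) × (Fin m → ℝ),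
      IFβ zy = ((1 / η₁) * w₁ (mnorm Sig (zy.2 - (blockArrange zy.1).mulVec β))) •
        (Ω⁻¹.mulVec ((blockArrange zy.1)ᵀ.mulVec
          (Sig⁻¹.mulVec (zy.2 - (blockArrange zy.1).mulVec β)))))
    -- α₁ = E[ψ₁(‖E‖_Σ)²]
    (α₁ : ℝ) (hα : α₁ = ∫ e, (deriv ρ₁ (mnorm Sig e)) ^ 2 ∂F) :
    (Matrix.of fun q r : SURIdx m pdim => ∫ zy, IFβ zy q * IFβ zy r ∂H) =
      (α₁ / ((m : ℝ) * η₁ ^ 2)) • Ω⁻¹ := by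
  have hSig_unit : IsUnit Sig.det := isUnit_iff_ne_zero.mpr hSig.det_pos.ne'
  set L : (SURIdx m pdim → ℝ) → Matrix (SURIdx m pdim) (Fin m) ℝ :=
    fun x => Ω⁻¹ * (blockArrange x)ᵀ * (Sig⁻¹ * A)
  have hIF_law : ∀ x z, IFβ (x, blockArrange x *ᵥ β + A *ᵥ z) =
      ((1 / η₁) * w₁ √(z ⬝ᵥ z)) • (L x *ᵥ z) := fun x z => by
    rw [hIF, add_sub_cancel_left, mnorm_mulVec_of_mul_transpose_eq hSig_unit hA]
    simp only [L, mulVec_mulVec, Matrix.mul_assoc]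
  have hIF_meas : Measurable IFβ := by
    rw [funext hIF]
    exact measurable_sur_influence
      (measurable_of_eq_div_of_ne_zero hρ₁.continuous_deriv.measurable hw₁) _ _ _ _
  have hΩ_symm : Ωᵀ = Ω := hΩ ▸ transpose_of_integral_transpose_mul_mul
    (by rw [transpose_nonsing_inv, transpose_eq_of_mul_transpose_eq hA])
  have hLL : ∀ x, L x * (L x)ᵀ = Ω⁻¹ * ((blockArrange x)ᵀ * Sig⁻¹ * blockArrange x) * Ω⁻¹ :=
    fun x => mul_mul_mul_transpose_of_mul_transpose_eq (by rw [transpose_nonsing_inv, hΩ_symm])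
      (inv_mul_mul_transpose_of_mul_transpose_eq hA) (blockArrange x)
  ext q r
  rw [of_apply, Matrix.smul_apply, smul_eq_mul, hH, hF,
    integral_sur_law A β (f := fun zy => IFβ zy q * IFβ zy r)
      (((measurable_pi_apply q).comp hIF_meas).mul ((measurable_pi_apply r).comp hIF_meas))]
  simp only [hIF_law, Pi.smul_apply, smul_eq_mul, mul_mul_mul_comm _ ((L _ *ᵥ _) q), ← sq]
  rw [integral_prod_mul_mulVec_apply_mul_mulVec_apply (L := L)
      (fun i k => memLp_mul_mul_apply (fun a b => memLp_blockArrange_apply hK2 b a) _ _ i k)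
      (integrable_radial_mul_coord (hρ₁.measurable_weight_sq hw₁ _)
        (hρ₁.integrable_weight_sq_mul_dotProduct hw₁ _))
      (hρ₁.integral_weight_sq_mul_coord hw₁ hν _)]
  simp only [hLL]
  rw [integral_mul_mul_apply (integrable_transpose_mul_mul_apply
      (memLp_blockArrange_apply hK2) _), ← hΩ, nonsing_inv_mul_mul_nonsing_inv, hα, hF,
    integral_comp_mnorm_map_mulVec hSig_unit hA (hρ₁.continuous_deriv.measurable.pow_const 2)]
  ring

/-- **Asymptotic variance of the MM regression estimator in the SUR model**
(Theorem 2, regression part): `∫ IF_β IF_βᵀ dH = (α₁/(m η₁²)) Ω⁻¹`. -/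
theorem asymptotic_variance_MM_regression
    {m : ℕ} (hm : 1 < m) {pdim : Fin m → ℕ}
    (ρ₁ : ℝ → ℝ) (c₁ : ℝ) (hρ₁ : IsRhoFunction ρ₁ c₁)
    (w₁ : ℝ → ℝ) (hw₁ : ∀ u : ℝ, u ≠ 0 → w₁ u = deriv ρ₁ u / u)
    (hw₁c : ContinuousAt w₁ 0)
    (K : Measure (SURIdx m pdim → ℝ)) [IsProbabilityMeasure K]
    (hK2 : Integrable (fun x => ∑ q, (x q) ^ 2) K)
    (Sig : Matrix (Fin m) (Fin m) ℝ) (hSig : Sig.PosDef)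
    (β : SURIdx m pdim → ℝ)
    (ν : Measure (Fin m → ℝ)) [IsProbabilityMeasure ν] (hν : OrthoInvariant ν)
    (A : Matrix (Fin m) (Fin m) ℝ) (hA : A * Aᵀ = Sig)
    (F : Measure (Fin m → ℝ)) (hF : F = ν.map A.mulVec)
    (H : Measure ((SURIdx m pdim → ℝ) × (Fin m → ℝ)))
    (hH : H = (K.prod F).map fun q => (q.1, (blockArrange q.1).mulVec β + q.2))
    -- Ω = E_K[Xᵀ Σ⁻¹ X], assumed invertible
    (Ω : Matrix (SURIdx m pdim) (SURIdx m pdim) ℝ)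
    (hΩ : Ω = Matrix.of fun q r =>
      ∫ x, ((blockArrange x)ᵀ * Sig⁻¹ * blockArrange x) q r ∂K)
    (hΩu : IsUnit Ω.det)
    -- η₁ ≠ 0
    (η₁ : ℝ)
    (hη : η₁ = ∫ e, ((1 - 1 / (m : ℝ)) * w₁ (mnorm Sig e)
        + (1 / (m : ℝ)) * deriv (deriv ρ₁) (mnorm Sig e)) ∂F)
    (hη0 : η₁ ≠ 0)
    -- the influence function IF_β
    (IFβ : (SURIdx m pdim → ℝ) × (Fin m → ℝ) → SURIdx m pdim → ℝ)
    (hIF : ∀ zy : (SURIdx m pdim → ℝ) × (Fin m → ℝ),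
      IFβ zy = ((1 / η₁) * w₁ (mnorm Sig (zy.2 - (blockArrange zy.1).mulVec β))) •
        (Ω⁻¹.mulVec ((blockArrange zy.1)ᵀ.mulVec
          (Sig⁻¹.mulVec (zy.2 - (blockArrange zy.1).mulVec β)))))
    -- α₁ = E[ψ₁(‖E‖_Σ)²]
    (α₁ : ℝ) (hα : α₁ = ∫ e, (deriv ρ₁ (mnorm Sig e)) ^ 2 ∂F) :
    (Matrix.of fun q r : SURIdx m pdim => ∫ zy, IFβ zy q * IFβ zy r ∂H) =
      (α₁ / ((m : ℝ) * η₁ ^ 2)) • Ω⁻¹ :=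
  asymptotic_variance_MM_regression_general ρ₁ c₁ hρ₁ w₁ hw₁ K hK2 Sig hSig β ν hν A hA F hF H hH Ω
    hΩ η₁ IFβ hIF α₁ hα
end
end

section
/- Mean and variance of the weighted cross-product of errors under the diagonality hypothesis (used in the proof of Theorem 5). Let m ≥ 2, let Z be a random vector in ℝ^m whose law is invariant under every orthogonal transformation of ℝ^m, let Σ = diag(σ₁₁, …, σ_mm) be a diagonal positive definite matrix, and set e = Σ^{1/2} Z, so that d := ‖e‖_Σ = ‖Z‖. Let w₁ : [0,∞) → ℝ be measurable, put ψ₁(u) = u w₁(u), and assume E[w₁(‖Z‖)² ‖Z‖⁴] < ∞. Then for every pair j ≠ k: (i) E[w₁(d) e_j e_k] = 0, and (ii) E[(w₁(d) e_j e_k)²] = (σ_jj σ_kk/(m(m+2))) E[ψ₁(‖e‖_Σ)² ‖e‖_Σ²]; in particular Var[w₁(d) e_j e_k] = (σ_jj σ_kk/(m(m+2))) E[ψ₁(‖e‖_Σ)² ‖e‖_Σ²]. -/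
/-!
Since `Σ` is diagonal, `‖e‖_Σ = ‖Z‖` and `e_j e_k = √(σ_jj σ_kk) Z_j Z_k`, so everything reduces
to radially weighted moments of `Z`. Flipping the sign of `Z_j` shows that the mean vanishes.
For `g = w₁²` put `Q_ab = E[g(‖Z‖) Z_a² Z_b²]`. Swapping two coordinates gives `Q_aa = Q_bb`, and
the reflection `(z_a, z_b) ↦ ((z_a + z_b)/√2, (z_a - z_b)/√2)` turns `Z_a² Z_b²` into
`(Z_a² - Z_b²)²/4`, whence `Q_ab = Q_aa/3` for `a ≠ b`. Summing over all pairs,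
`E[g(‖Z‖) ‖Z‖⁴] = ∑_{a,b} Q_ab = m(m+2)/3 · Q_aa`, so `Q_jk = E[g(‖Z‖) ‖Z‖⁴]/(m(m+2))`.
-/

open MeasureTheory Matrix ProbabilityTheory

noncomputable section

/-- The Euclidean norm on `ℝ^m` (as plain functions `Fin m → ℝ`). -/
def eNorm {m : ℕ} (y : Fin m → ℝ) : ℝ := Real.sqrt (∑ i, (y i) ^ 2)

namespace LinearMap

variable {n : Type*} [Fintype n]

theorem dotProduct_map_map {f : (n → ℝ) →ₗ[ℝ] n → ℝ}
    (hf : ∀ z, f z ⬝ᵥ f z = z ⬝ᵥ z) (x y : n → ℝ) : f x ⬝ᵥ f y = x ⬝ᵥ y := by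
  have h := hf (x + y)
  simp only [map_add, add_dotProduct, dotProduct_add, dotProduct_comm (f y) (f x),
    dotProduct_comm y x, hf] at h
  linarith

theorem toMatrix'_transpose_mul_self [DecidableEq n] {f : (n → ℝ) →ₗ[ℝ] n → ℝ}
    (hf : ∀ z, f z ⬝ᵥ f z = z ⬝ᵥ z) : (toMatrix' f)ᵀ * toMatrix' f = 1 := by
  ext i l
  have h := dotProduct_map_map hf (Pi.single i 1) (Pi.single l 1)
  rw [← toMatrix'_mulVec, ← toMatrix'_mulVec, mulVec_single_one, mulVec_single_one] at h
  simpa [Matrix.mul_apply, dotProduct, Matrix.one_apply, Pi.single_apply, eq_comm] using h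

end LinearMap

section PlaneReflection

variable {n : Type*} [DecidableEq n]

def planeReflection (a b : n) (c s : ℝ) : (n → ℝ) →ₗ[ℝ] n → ℝ where
  toFun z i := if i = a then c * z a + s * z b else if i = b then s * z a - c * z b else z i
  map_add' z w := by
    ext i
    simp only [Pi.add_apply]
    split_ifs <;> ring
  map_smul' r z := by
    ext i
    simp only [Pi.smul_apply, smul_eq_mul, RingHom.id_apply]
    split_ifs <;> ring

theorem planeReflection_apply_left {a b : n} (c s : ℝ) (z : n → ℝ) :
    planeReflection a b c s z a = c * z a + s * z b :=
  if_pos rfl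

theorem planeReflection_apply_right {a b : n} (hab : a ≠ b) (c s : ℝ) (z : n → ℝ) :
    planeReflection a b c s z b = s * z a - c * z b := by
  simp [planeReflection, hab.symm]

theorem planeReflection_dotProduct_self [Fintype n] {a b : n} (hab : a ≠ b) {c s : ℝ}
    (hcs : c ^ 2 + s ^ 2 = 1) (z : n → ℝ) :
    planeReflection a b c s z ⬝ᵥ planeReflection a b c s z = z ⬝ᵥ z := by
  rw [← sub_eq_zero, dotProduct, dotProduct, ← Finset.sum_sub_distrib,
    Fintype.sum_eq_add a b hab fun i ⟨hia, hib⟩ => by simp [planeReflection, hia, hib],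
    planeReflection_apply_left, planeReflection_apply_right hab]
  linear_combination (z a ^ 2 + z b ^ 2) * hcs

end PlaneReflection

section Norms

variable {m : ℕ}

@[fun_prop]
theorem measurable_eNorm : Measurable (eNorm (m := m)) := by
  unfold eNorm
  fun_prop

theorem eNorm_eq_sqrt_dotProduct (z : Fin m → ℝ) : eNorm z = √(z ⬝ᵥ z) := by
  simp [eNorm, dotProduct, sq]

theorem eNorm_planeReflection {a b : Fin m} (hab : a ≠ b) {c s : ℝ}
    (hcs : c ^ 2 + s ^ 2 = 1) (z : Fin m → ℝ) : eNorm (planeReflection a b c s z) = eNorm z := by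
  rw [eNorm_eq_sqrt_dotProduct, eNorm_eq_sqrt_dotProduct, planeReflection_dotProduct_self hab hcs]

theorem sq_le_eNorm_sq (z : Fin m → ℝ) (a : Fin m) : z a ^ 2 ≤ eNorm z ^ 2 := by
  rw [eNorm, Real.sq_sqrt (Finset.sum_nonneg fun i _ => sq_nonneg _)]
  exact Finset.single_le_sum (fun i _ => sq_nonneg (z i)) (Finset.mem_univ a)

theorem eNorm_pow_four (z : Fin m → ℝ) : eNorm z ^ 4 = ∑ i, ∑ l, z i ^ 2 * z l ^ 2 := by
  rw [eNorm, show (4 : ℕ) = 2 * 2 from rfl, pow_mul,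
    Real.sq_sqrt (Finset.sum_nonneg fun i _ => sq_nonneg _), sq, Finset.sum_mul_sum]

theorem mnorm_diagonal_mulVec_diagonal_sqrt {σ : Fin m → ℝ} (hσ : ∀ i, 0 < σ i)
    (z : Fin m → ℝ) : mnorm (diagonal σ) (diagonal (fun i => √(σ i)) *ᵥ z) = eNorm z := by
  have hinv : (diagonal σ)⁻¹ = diagonal σ⁻¹ := inv_eq_right_inv <| by
    rw [diagonal_mul_diagonal, ← diagonal_one]
    exact congrArg diagonal (funext fun i => mul_inv_cancel₀ (hσ i).ne')
  rw [mnorm, eNorm, hinv]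
  congr 1
  refine Finset.sum_congr rfl fun i _ => ?_
  have hσi := hσ i
  simp only [mulVec_diagonal, Pi.inv_apply]
  field_simp
  rw [Real.sq_sqrt hσi.le]
  ring

end Norms

section RadialMoments

variable {m : ℕ} {μ : Measure (Fin m → ℝ)} {g : ℝ → ℝ}

variable (μ g) in
def quarticMoment (a b : Fin m) : ℝ := ∫ z, g (eNorm z) * (z a ^ 2 * z b ^ 2) ∂μ

theorem integrable_radial_mul_sq_mul_sq (hg : Measurable g)
    (hint : Integrable (fun z => g (eNorm z) * eNorm z ^ 4) μ) (a b : Fin m) :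
    Integrable (fun z => g (eNorm z) * (z a ^ 2 * z b ^ 2)) μ := by
  refine hint.mono (by fun_prop) (.of_forall fun z => ?_)
  rw [norm_mul, norm_mul (g _), Real.norm_of_nonneg (by positivity : 0 ≤ z a ^ 2 * z b ^ 2),
    Real.norm_of_nonneg (by positivity : 0 ≤ eNorm z ^ 4), show (4 : ℕ) = 2 + 2 from rfl, pow_add]
  gcongr ‖_‖ * ?_
  exact mul_le_mul (sq_le_eNorm_sq z a) (sq_le_eNorm_sq z b) (sq_nonneg _) (sq_nonneg _)

namespace OrthoInvariant

theorem map_linearMap (hμ : OrthoInvariant μ) {f : (Fin m → ℝ) →ₗ[ℝ] Fin m → ℝ}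
    (hf : ∀ z, f z ⬝ᵥ f z = z ⬝ᵥ z) : μ.map f = μ := by
  have h := hμ _ (LinearMap.toMatrix'_transpose_mul_self hf)
  rwa [show (LinearMap.toMatrix' f).mulVec = f from funext (LinearMap.toMatrix'_mulVec f)] at h

theorem integral_comp (hμ : OrthoInvariant μ) {f : (Fin m → ℝ) →ₗ[ℝ] Fin m → ℝ}
    (hf : ∀ z, f z ⬝ᵥ f z = z ⬝ᵥ z) {F : (Fin m → ℝ) → ℝ} (hF : AEStronglyMeasurable F μ) :
    ∫ z, F (f z) ∂μ = ∫ z, F z ∂μ := by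
  conv_rhs => rw [← hμ.map_linearMap hf]
  rw [integral_map (LinearMap.continuous_of_finiteDimensional f).aemeasurable
    (by rwa [hμ.map_linearMap hf])]

theorem integral_radial_comp_planeReflection (hμ : OrthoInvariant μ) {a b : Fin m} (hab : a ≠ b)
    {c s : ℝ} (hcs : c ^ 2 + s ^ 2 = 1) (hg : Measurable g) {F : (Fin m → ℝ) → ℝ}
    (hF : Measurable F) :
    ∫ z, g (eNorm z) * F (planeReflection a b c s z) ∂μ = ∫ z, g (eNorm z) * F z ∂μ := by
  conv_lhs => enter [2, z]; rw [← eNorm_planeReflection hab hcs z]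
  exact hμ.integral_comp (F := fun z => g (eNorm z) * F z)
    (planeReflection_dotProduct_self hab hcs) (by fun_prop)

theorem integral_radial_mul_mul_eq_zero (hμ : OrthoInvariant μ) (hg : Measurable g) {a b : Fin m}
    (hab : a ≠ b) : ∫ z, g (eNorm z) * z a * z b ∂μ = 0 := by
  have h := hμ.integral_radial_comp_planeReflection hab (c := -1) (s := 0) (by norm_num) hg
    (F := fun z => z a * z b) (by fun_prop)
  have hodd : ∀ z : Fin m → ℝ, g (eNorm z) * ((-1 * z a + 0 * z b) * (0 * z a - -1 * z b)) =
      -(g (eNorm z) * (z a * z b)) := fun z => by ring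
  simp only [planeReflection_apply_left, planeReflection_apply_right hab, hodd, integral_neg] at h
  simp only [mul_assoc]
  linarith

theorem quarticMoment_self_eq (hμ : OrthoInvariant μ) (hg : Measurable g) (a b : Fin m) :
    quarticMoment μ g a a = quarticMoment μ g b b := by
  rcases eq_or_ne a b with rfl | hab
  · rfl
  have h := hμ.integral_radial_comp_planeReflection hab (c := 0) (s := 1) (by norm_num) hg
    (F := fun z => z a ^ 2 * z a ^ 2) (by fun_prop)
  simp only [planeReflection_apply_left, zero_mul, one_mul, zero_add] at h
  exact h.symm

theorem quarticMoment_of_ne (hμ : OrthoInvariant μ) (hg : Measurable g)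
    (hint : Integrable (fun z => g (eNorm z) * eNorm z ^ 4) μ) {a b : Fin m} (hab : a ≠ b) :
    quarticMoment μ g a b = quarticMoment μ g a a / 3 := by
  set c : ℝ := (√2)⁻¹
  have hc : c ^ 2 = 1 / 2 := by rw [inv_pow, Real.sq_sqrt zero_le_two, one_div]
  have h := hμ.integral_radial_comp_planeReflection hab (c := c) (s := c) (by rw [hc]; norm_num)
    hg (F := fun z => z a ^ 2 * z b ^ 2) (by fun_prop)
  have hpt : ∀ z : Fin m → ℝ, g (eNorm z) * ((c * z a + c * z b) ^ 2 * (c * z a - c * z b) ^ 2)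
      = 1 / 4 * (g (eNorm z) * (z a ^ 2 * z a ^ 2)) - 1 / 2 * (g (eNorm z) * (z a ^ 2 * z b ^ 2))
        + 1 / 4 * (g (eNorm z) * (z b ^ 2 * z b ^ 2)) := fun z => by
    linear_combination g (eNorm z) * (z a ^ 2 - z b ^ 2) ^ 2 * (c ^ 2 + 1 / 2) * hc
  have hI := integrable_radial_mul_sq_mul_sq hg hint
  simp only [planeReflection_apply_left, planeReflection_apply_right hab, hpt] at h
  rw [integral_add (((hI a a).const_mul _).sub' ((hI a b).const_mul _)) ((hI b b).const_mul _),
    integral_sub ((hI a a).const_mul _) ((hI a b).const_mul _), integral_const_mul,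
    integral_const_mul, integral_const_mul] at h
  have hab' := hμ.quarticMoment_self_eq hg a b
  unfold quarticMoment at hab' ⊢
  linarith

theorem integral_radial_mul_eNorm_pow_four (hμ : OrthoInvariant μ) (hg : Measurable g)
    (hint : Integrable (fun z => g (eNorm z) * eNorm z ^ 4) μ) (a : Fin m) :
    ∫ z, g (eNorm z) * eNorm z ^ 4 ∂μ = m * (m + 2) / 3 * quarticMoment μ g a a := by
  have hI := integrable_radial_mul_sq_mul_sq hg hint
  have hrow : ∀ i, ∑ l, quarticMoment μ g i l = (m + 2) / 3 * quarticMoment μ g a a := by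
    intro i
    have hterm : ∀ l, quarticMoment μ g i l =
        quarticMoment μ g a a / 3 + if i = l then 2 / 3 * quarticMoment μ g a a else 0 := by
      intro l
      rcases eq_or_ne i l with rfl | hil
      · rw [if_pos rfl, hμ.quarticMoment_self_eq hg i a]
        ring
      · rw [if_neg hil, hμ.quarticMoment_of_ne hg hint hil, hμ.quarticMoment_self_eq hg i a]
        ring
    simp only [hterm, Finset.sum_add_distrib, Finset.sum_const, Finset.sum_ite_eq,
      Finset.mem_univ, if_true, Finset.card_univ, Fintype.card_fin, nsmul_eq_mul]
    ring
  simp only [eNorm_pow_four, Finset.mul_sum]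
  rw [integral_finsetSum _ fun i _ => integrable_finsetSum _ fun l _ => hI i l]
  simp only [integral_finsetSum _ fun l _ => hI _ l]
  change ∑ i, ∑ l, quarticMoment μ g i l = _
  simp only [hrow, Finset.sum_const, Finset.card_univ, Fintype.card_fin, nsmul_eq_mul]
  ring

theorem integral_sq_radial_mul_mul (hμ : OrthoInvariant μ) {w : ℝ → ℝ} (hw : Measurable w)
    (hint : Integrable (fun z => w (eNorm z) ^ 2 * eNorm z ^ 4) μ) {a b : Fin m} (hab : a ≠ b) :
    ∫ z, (w (eNorm z) * z a * z b) ^ 2 ∂μ =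
      (∫ z, w (eNorm z) ^ 2 * eNorm z ^ 4 ∂μ) / (m * (m + 2)) := by
  have hw2 : Measurable fun u => w u ^ 2 := by fun_prop
  have hm : (m : ℝ) ≠ 0 := Nat.cast_ne_zero.mpr (Fin.pos a).ne'
  have hsq : ∫ z, (w (eNorm z) * z a * z b) ^ 2 ∂μ = quarticMoment μ (fun u => w u ^ 2) a b := by
    simp only [quarticMoment, mul_pow, mul_assoc]
  rw [hsq, hμ.quarticMoment_of_ne hw2 hint hab,
    hμ.integral_radial_mul_eNorm_pow_four (g := fun u => w u ^ 2) hw2 hint a]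
  field_simp

theorem variance_radial_mul_mul (hμ : OrthoInvariant μ) [IsProbabilityMeasure μ] {w : ℝ → ℝ}
    (hw : Measurable w) (hint : Integrable (fun z => w (eNorm z) ^ 2 * eNorm z ^ 4) μ)
    {a b : Fin m} (hab : a ≠ b) :
    variance (fun z => w (eNorm z) * z a * z b) μ = ∫ z, (w (eNorm z) * z a * z b) ^ 2 ∂μ := by
  have hsq : Integrable (fun z => (w (eNorm z) * z a * z b) ^ 2) μ := by
    simpa only [mul_pow, mul_assoc] using
      integrable_radial_mul_sq_mul_sq (g := fun u => w u ^ 2) (by fun_prop) hint a b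
  rw [variance_eq_sub ((memLp_two_iff_integrable_sq (by fun_prop)).mpr hsq),
    hμ.integral_radial_mul_mul_eq_zero hw hab]
  simp only [Pi.pow_apply]
  ring

end OrthoInvariant

end RadialMoments

theorem weighted_crossproduct_mean_variance_general
    {m : ℕ}
    (μ : Measure (Fin m → ℝ)) [IsProbabilityMeasure μ] (hμ : OrthoInvariant μ)
    (σd : Fin m → ℝ) (hσd : ∀ j, 0 < σd j)
    (w₁ : ℝ → ℝ) (hw₁ : Measurable w₁)
    (ψ₁ : ℝ → ℝ) (hψ₁ : ∀ u, ψ₁ u = u * w₁ u)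
    (e : (Fin m → ℝ) → Fin m → ℝ)
    (he : ∀ z, e z = (Matrix.diagonal fun j => Real.sqrt (σd j)).mulVec z)
    (hint : Integrable (fun z => (w₁ (eNorm z)) ^ 2 * (eNorm z) ^ 4) μ)
    (j k : Fin m) (hjk : j ≠ k) :
    (∫ z, w₁ (mnorm (Matrix.diagonal σd) (e z)) * e z j * e z k ∂μ = 0) ∧
    (∫ z, (w₁ (mnorm (Matrix.diagonal σd) (e z)) * e z j * e z k) ^ 2 ∂μ =
      (σd j * σd k / ((m : ℝ) * ((m : ℝ) + 2))) *
        ∫ z, (ψ₁ (mnorm (Matrix.diagonal σd) (e z))) ^ 2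
          * (mnorm (Matrix.diagonal σd) (e z)) ^ 2 ∂μ) ∧
    (variance (fun z => w₁ (mnorm (Matrix.diagonal σd) (e z)) * e z j * e z k) μ =
      (σd j * σd k / ((m : ℝ) * ((m : ℝ) + 2))) *
        ∫ z, (ψ₁ (mnorm (Matrix.diagonal σd) (e z))) ^ 2
          * (mnorm (Matrix.diagonal σd) (e z)) ^ 2 ∂μ) := by
  have hd : ∀ z, mnorm (diagonal σd) (e z) = eNorm z := fun z => by
    rw [he, mnorm_diagonal_mulVec_diagonal_sqrt hσd]
  have hX : ∀ z, w₁ (mnorm (diagonal σd) (e z)) * e z j * e z k =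
      √(σd j) * √(σd k) * (w₁ (eNorm z) * z j * z k) := fun z => by
    rw [hd, he, mulVec_diagonal, mulVec_diagonal]
    ring
  have hψ : ∀ z, ψ₁ (mnorm (diagonal σd) (e z)) ^ 2 * mnorm (diagonal σd) (e z) ^ 2 =
      w₁ (eNorm z) ^ 2 * eNorm z ^ 4 := fun z => by
    rw [hd, hψ₁]
    ring
  have hσ : (√(σd j) * √(σd k)) ^ 2 = σd j * σd k := by
    rw [mul_pow, Real.sq_sqrt (hσd j).le, Real.sq_sqrt (hσd k).le]
  have hsecond : ∫ z, (w₁ (mnorm (diagonal σd) (e z)) * e z j * e z k) ^ 2 ∂μ =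
      σd j * σd k / (m * (m + 2)) * ∫ z, w₁ (eNorm z) ^ 2 * eNorm z ^ 4 ∂μ := by
    simp only [hX, mul_pow _ (w₁ _ * _ * _), integral_const_mul, hσ,
      hμ.integral_sq_radial_mul_mul hw₁ hint hjk]
    ring
  simp only [hψ]
  refine ⟨?_, hsecond, ?_⟩
  · simp only [hX, integral_const_mul, hμ.integral_radial_mul_mul_eq_zero hw₁ hjk, mul_zero]
  · rw [← hsecond]
    simp only [hX, variance_const_mul, hμ.variance_radial_mul_mul hw₁ hint hjk,
      mul_pow _ (w₁ _ * _ * _), integral_const_mul]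

/-- **Mean and variance of the weighted cross-product of errors under the diagonality
hypothesis** (used in the proof of Theorem 5).  Here `μ` is the (spherically symmetric)
law of `Z`, `Σ = diag(σ₁₁,…,σ_mm)` and `e = Σ^{1/2} Z`. -/
theorem weighted_crossproduct_mean_variance
    {m : ℕ} (hm : 2 ≤ m)
    (μ : Measure (Fin m → ℝ)) [IsProbabilityMeasure μ] (hμ : OrthoInvariant μ)
    (σd : Fin m → ℝ) (hσd : ∀ j, 0 < σd j)
    (w₁ : ℝ → ℝ) (hw₁ : Measurable w₁)
    (ψ₁ : ℝ → ℝ) (hψ₁ : ∀ u, ψ₁ u = u * w₁ u)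
    (e : (Fin m → ℝ) → Fin m → ℝ)
    (he : ∀ z, e z = (Matrix.diagonal fun j => Real.sqrt (σd j)).mulVec z)
    (hint : Integrable (fun z => (w₁ (eNorm z)) ^ 2 * (eNorm z) ^ 4) μ)
    (j k : Fin m) (hjk : j ≠ k) :
    (∫ z, w₁ (mnorm (Matrix.diagonal σd) (e z)) * e z j * e z k ∂μ = 0) ∧
    (∫ z, (w₁ (mnorm (Matrix.diagonal σd) (e z)) * e z j * e z k) ^ 2 ∂μ =
      (σd j * σd k / ((m : ℝ) * ((m : ℝ) + 2))) *
        ∫ z, (ψ₁ (mnorm (Matrix.diagonal σd) (e z))) ^ 2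
          * (mnorm (Matrix.diagonal σd) (e z)) ^ 2 ∂μ) ∧
    (variance (fun z => w₁ (mnorm (Matrix.diagonal σd) (e z)) * e z j * e z k) μ =
      (σd j * σd k / ((m : ℝ) * ((m : ℝ) + 2))) *
        ∫ z, (ψ₁ (mnorm (Matrix.diagonal σd) (e z))) ^ 2
          * (mnorm (Matrix.diagonal σd) (e z)) ^ 2 ∂μ) :=
  weighted_crossproduct_mean_variance_general μ hμ σd hσd w₁ hw₁ ψ₁ hψ₁ e he hint j k hjk
end
end

section
/- Blockwise scale equivariance of the S-estimation problem with respect to the responses. Let A = diag(a₁,…,a_m) with all a_j ≠ 0, and consider the transformed SUR data with unchanged design matrices X_j and responses a_j y_j (equivalently, responses Y A). Then a pair (B, C) with B = bdiag(b₁,…,b_m) and C symmetric positive definite is a global minimizer of the S-estimation problem for the original data (X₁,…,X_m, Y) if and only if (bdiag(a₁ b₁, …, a_m b_m), A C A) is a global minimizer of the S-estimation problem for the transformed data. -/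
/-!
With `A = diagonal a`, the substitution `(bⱼ, C) ↦ (aⱼ bⱼ, A C A)` multiplies every residual by
`A`, so it leaves each distance `eᵀ C⁻¹ e`, and hence the S-constraint, unchanged; it preserves
positive definiteness and multiplies `det C` by `(det A)² > 0`. Being a bijection (its inverse
uses `a⁻¹`), it maps the feasible set of one problem onto that of the other and preserves the
order of the objective, hence maps minimizers to minimizers.
-/

open Matrix

noncomputable section

/-- Residual of observation `i`: the `i`-th row of `Y − X̃ B`, where `B` is the
block-diagonal coefficient matrix built from the stacked coefficient vector `b`. -/
def resid {n m : ℕ} {pdim : Fin m → ℕ} (X : Matrix (Fin n) (SURIdx m pdim) ℝ)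
    (Y : Matrix (Fin n) (Fin m) ℝ) (b : SURIdx m pdim → ℝ) (i : Fin n) : Fin m → ℝ :=
  fun j => Y i j - ∑ k : Fin (pdim j), X i ⟨j, k⟩ * b ⟨j, k⟩

/-- The S-estimation constraint `(1/n) Σᵢ ρ₀(√(eᵢ(B)ᵀ C⁻¹ eᵢ(B))) = δ₀`. -/
def SConstraint {n m : ℕ} {pdim : Fin m → ℕ} (ρ₀ : ℝ → ℝ) (δ₀ : ℝ)
    (X : Matrix (Fin n) (SURIdx m pdim) ℝ) (Y : Matrix (Fin n) (Fin m) ℝ)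
    (b : SURIdx m pdim → ℝ) (C : Matrix (Fin m) (Fin m) ℝ) : Prop :=
  (1 / (n : ℝ)) * ∑ i, ρ₀ (Real.sqrt (resid X Y b i ⬝ᵥ C⁻¹.mulVec (resid X Y b i))) = δ₀

/-- `(b, C)` is a global minimizer of the S-estimation problem: `C` is symmetric positive
definite, the constraint holds, and `det C` is minimal among all feasible pairs. -/
def IsSMin {n m : ℕ} {pdim : Fin m → ℕ} (ρ₀ : ℝ → ℝ) (δ₀ : ℝ)
    (X : Matrix (Fin n) (SURIdx m pdim) ℝ) (Y : Matrix (Fin n) (Fin m) ℝ)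
    (b : SURIdx m pdim → ℝ) (C : Matrix (Fin m) (Fin m) ℝ) : Prop :=
  C.PosDef ∧ SConstraint ρ₀ δ₀ X Y b C ∧
    ∀ (b' : SURIdx m pdim → ℝ) (C' : Matrix (Fin m) (Fin m) ℝ),
      C'.PosDef → SConstraint ρ₀ δ₀ X Y b' C' → C.det ≤ C'.det

namespace Matrix

variable {ι K : Type*} [Fintype ι] [DecidableEq ι]

theorem dotProduct_mulVec_inv_conj_mulVec [Field K] {D : Matrix ι ι K} (hD : IsUnit D.det)
    (C : Matrix ι ι K) (e : ι → K) :
    (D *ᵥ e) ⬝ᵥ (D * C * Dᵀ)⁻¹ *ᵥ (D *ᵥ e) = e ⬝ᵥ C⁻¹ *ᵥ e := by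
  rw [mul_inv_rev, mul_inv_rev, ← mulVec_mulVec, ← mulVec_mulVec, mulVec_mulVec (M := D⁻¹),
    nonsing_inv_mul _ hD, one_mulVec, dotProduct_mulVec, ← mulVec_transpose, mulVec_mulVec,
    ← transpose_nonsing_inv, transpose_transpose, nonsing_inv_mul _ hD, one_mulVec]

theorem diagonal_mul_mul_diagonal_inv_cancel [Field K] {a : ι → K} (ha : ∀ j, a j ≠ 0)
    (C : Matrix ι ι K) :
    diagonal a * (diagonal a⁻¹ * C * diagonal a⁻¹) * diagonal a = C := by
  ext i j
  simp only [diagonal_mul, mul_diagonal, Pi.inv_apply]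
  field_simp [ha i, ha j]

theorem det_diagonal_mul_mul_diagonal [CommRing K] (a : ι → K) (C : Matrix ι ι K) :
    (diagonal a * C * diagonal a).det = (∏ j, a j) ^ 2 * C.det := by
  rw [det_mul, det_mul, det_diagonal]
  ring

theorem posDef_diagonal_mul_mul_diagonal_iff [Field K] [PartialOrder K] [StarRing K]
    [TrivialStar K] {a : ι → K} (ha : ∀ j, a j ≠ 0) {C : Matrix ι ι K} :
    (diagonal a * C * diagonal a).PosDef ↔ C.PosDef := by
  have hD : IsUnit (diagonal a) := isUnit_diagonal.mpr (Pi.isUnit_iff.mpr fun j => (ha j).isUnit)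
  simpa [star_eq_conjTranspose, diagonal_conjTranspose] using
    IsUnit.posDef_star_right_conjugate_iff (x := C) hD

end Matrix

section Scaling

variable {n m : ℕ} {pdim : Fin m → ℕ} (X : Matrix (Fin n) (SURIdx m pdim) ℝ)
  (Y : Matrix (Fin n) (Fin m) ℝ)

theorem resid_scale (a : Fin m → ℝ) (b : SURIdx m pdim → ℝ) (i : Fin n) :
    resid X (of fun i j => a j * Y i j) (fun q => a q.1 * b q) i =
      diagonal a *ᵥ resid X Y b i := by
  ext j
  simp only [resid, of_apply, mulVec_diagonal, mul_sub, Finset.mul_sum, mul_left_comm]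

theorem sConstraint_scale_iff (ρ₀ : ℝ → ℝ) (δ₀ : ℝ) {a : Fin m → ℝ} (ha : ∀ j, a j ≠ 0)
    (b : SURIdx m pdim → ℝ) (C : Matrix (Fin m) (Fin m) ℝ) :
    SConstraint ρ₀ δ₀ X (of fun i j => a j * Y i j) (fun q => a q.1 * b q)
        (diagonal a * C * diagonal a) ↔ SConstraint ρ₀ δ₀ X Y b C := by
  have hD : IsUnit (diagonal a).det := by
    rw [det_diagonal]
    exact (Finset.prod_ne_zero_iff.mpr fun j _ => ha j).isUnit
  have hquad := dotProduct_mulVec_inv_conj_mulVec hD C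
  rw [diagonal_transpose] at hquad
  simp only [SConstraint, resid_scale, hquad]

end Scaling

theorem S_scale_equivariance_responses_general
    {n m : ℕ} {pdim : Fin m → ℕ}
    (ρ₀ : ℝ → ℝ) (δ₀ : ℝ)
    (X : Matrix (Fin n) (SURIdx m pdim) ℝ) (Y : Matrix (Fin n) (Fin m) ℝ)
    (a : Fin m → ℝ) (ha : ∀ j, a j ≠ 0)
    (b : SURIdx m pdim → ℝ) (C : Matrix (Fin m) (Fin m) ℝ) :
    IsSMin ρ₀ δ₀ X Y b C ↔
      IsSMin ρ₀ δ₀ X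
        (Matrix.of fun i j => a j * Y i j)
        (fun q => a q.1 * b q)
        (Matrix.diagonal a * C * Matrix.diagonal a) := by
  unfold IsSMin
  rw [posDef_diagonal_mul_mul_diagonal_iff ha, sConstraint_scale_iff X Y ρ₀ δ₀ ha]
  refine and_congr_right fun _ => and_congr_right fun _ =>
    ⟨fun hmin b' C' hC' hcon' => ?_, fun hmin b' C' hC' hcon' => ?_⟩
  · obtain ⟨b'', rfl⟩ : ∃ b'', b' = fun q => a q.1 * b'' q :=
      ⟨fun q => (a q.1)⁻¹ * b' q, funext fun q => (mul_inv_cancel_left₀ (ha q.1) _).symm⟩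
    obtain ⟨C'', rfl⟩ : ∃ C'', C' = diagonal a * C'' * diagonal a :=
      ⟨_, (diagonal_mul_mul_diagonal_inv_cancel ha C').symm⟩
    rw [posDef_diagonal_mul_mul_diagonal_iff ha] at hC'
    rw [sConstraint_scale_iff X Y ρ₀ δ₀ ha] at hcon'
    rw [det_diagonal_mul_mul_diagonal, det_diagonal_mul_mul_diagonal]
    exact mul_le_mul_of_nonneg_left (hmin b'' C'' hC' hcon') (sq_nonneg _)
  · have hle := hmin _ _ ((posDef_diagonal_mul_mul_diagonal_iff ha).mpr hC')
      ((sConstraint_scale_iff X Y ρ₀ δ₀ ha b' C').mpr hcon')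
    rw [det_diagonal_mul_mul_diagonal, det_diagonal_mul_mul_diagonal] at hle
    exact le_of_mul_le_mul_left hle
      (sq_pos_of_ne_zero (Finset.prod_ne_zero_iff.mpr fun j _ => ha j))

/-- **Blockwise scale equivariance of the S-estimation problem with respect to the
responses**: for `A = diag(a₁,…,a_m)` with all `a_j ≠ 0`, `(B, C)` minimizes the
S-problem for the data `(X₁,…,X_m, Y)` iff `(bdiag(a₁b₁,…,a_mb_m), A C A)` minimizes it
for the data with responses `Y A`. -/
theorem S_scale_equivariance_responses
    {n m : ℕ} (hm : 1 < m) {pdim : Fin m → ℕ}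
    (ρ₀ : ℝ → ℝ) (c₀ : ℝ) (hρ₀ : IsRhoFunction ρ₀ c₀)
    (δ₀ : ℝ) (hδ : 0 < δ₀ ∧ δ₀ < ρ₀ c₀)
    (X : Matrix (Fin n) (SURIdx m pdim) ℝ) (Y : Matrix (Fin n) (Fin m) ℝ)
    (a : Fin m → ℝ) (ha : ∀ j, a j ≠ 0)
    (b : SURIdx m pdim → ℝ) (C : Matrix (Fin m) (Fin m) ℝ) :
    IsSMin ρ₀ δ₀ X Y b C ↔
      IsSMin ρ₀ δ₀ X
        (Matrix.of fun i j => a j * Y i j)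
        (fun q => a q.1 * b q)
        (Matrix.diagonal a * C * Matrix.diagonal a) :=
  S_scale_equivariance_responses_general ρ₀ δ₀ X Y a ha b C
end
end

section
/- GLS coincides with blockwise least squares when all design matrices are identical. Consider SUR data with a common design matrix X₀ ∈ ℝ^{n×p₀} (i.e. p_j = p₀ and X_j = X₀ for all j = 1,…,m) and responses y_j ∈ ℝ^n, with X₀ᵀ X₀ invertible, and let Σ ∈ ℝ^{m×m} be any symmetric positive definite matrix. Let X = bdiag(X₀,…,X₀) ∈ ℝ^{nm×mp₀} and y = (y₁ᵀ,…,y_mᵀ)ᵀ ∈ ℝ^{nm} (coordinates indexed by pairs (j,i) of block and observation), and let Σ⁻¹ ⊗ I_n denote the Kronecker product acting on these coordinates. Then Xᵀ(Σ⁻¹ ⊗ I_n)X is invertible and the j-th block of the GLS estimator β̂_GLS = (Xᵀ(Σ⁻¹ ⊗ I_n)X)⁻¹ Xᵀ(Σ⁻¹ ⊗ I_n) y equals the ordinary least squares estimator (X₀ᵀ X₀)⁻¹ X₀ᵀ y_j for every j = 1,…,m. -/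
open Matrix Kronecker

noncomputable section

/-- The stacked design matrix `X = bdiag(X₀,…,X₀) ∈ ℝ^{nm×mp₀}` for a SUR model with a
common design matrix `X₀`, with rows indexed by pairs `(j, i)` of block and observation
and columns indexed by pairs `(j, k)` of block and predictor. -/
def bigXCommon {n p₀ : ℕ} (m : ℕ) (X₀ : Matrix (Fin n) (Fin p₀) ℝ) :
    Matrix (Fin m × Fin n) (Fin m × Fin p₀) ℝ :=
  Matrix.of fun r q => if r.1 = q.1 then X₀ r.2 q.2 else 0

/-! The stacked design is `X = I_m ⊗ X₀`, so the mixed-product rule gives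
`Xᵀ(W ⊗ I_n)X = W ⊗ X₀ᵀX₀` with inverse `W⁻¹ ⊗ (X₀ᵀX₀)⁻¹`. Hence the GLS map
`(Xᵀ(W ⊗ I_n)X)⁻¹Xᵀ(W ⊗ I_n)` is `(W⁻¹W) ⊗ (X₀ᵀX₀)⁻¹X₀ᵀ = I_m ⊗ (X₀ᵀX₀)⁻¹X₀ᵀ`: the weight
cancels and each block is fitted by OLS. -/

lemma bigXCommon_eq_one_kronecker {n p₀ : ℕ} (m : ℕ) (X₀ : Matrix (Fin n) (Fin p₀) ℝ) :
    bigXCommon m X₀ = (1 : Matrix (Fin m) (Fin m) ℝ) ⊗ₖ X₀ := by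
  ext ⟨j, i⟩ ⟨j', k⟩
  simp [bigXCommon, one_apply, ite_mul]

section OneKronecker

variable {R l n p : Type*} [CommRing R] [Fintype l] [DecidableEq l] [Fintype n] [DecidableEq n]

lemma transpose_mul_kronecker_one_mul (W : Matrix l l R) (B : Matrix n p R) :
    ((1 : Matrix l l R) ⊗ₖ B)ᵀ * (W ⊗ₖ (1 : Matrix n n R)) * ((1 : Matrix l l R) ⊗ₖ B) =
      W ⊗ₖ (Bᵀ * B) := by
  rw [← kroneckerMap_transpose, transpose_one, ← mul_kronecker_mul, ← mul_kronecker_mul]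
  simp only [Matrix.one_mul, Matrix.mul_one]

lemma gls_projection_one_kronecker [Fintype p] [DecidableEq p] {W : Matrix l l R}
    (hW : IsUnit W.det) (B : Matrix n p R) :
    (((1 : Matrix l l R) ⊗ₖ B)ᵀ * (W ⊗ₖ (1 : Matrix n n R)) * ((1 : Matrix l l R) ⊗ₖ B))⁻¹ *
        (((1 : Matrix l l R) ⊗ₖ B)ᵀ * (W ⊗ₖ (1 : Matrix n n R))) =
      (1 : Matrix l l R) ⊗ₖ ((Bᵀ * B)⁻¹ * Bᵀ) := by
  rw [transpose_mul_kronecker_one_mul, inv_kronecker, ← kroneckerMap_transpose, transpose_one,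
    ← mul_kronecker_mul, Matrix.one_mul, Matrix.mul_one, ← mul_kronecker_mul, nonsing_inv_mul W hW]

omit [DecidableEq n] in
lemma one_kronecker_mulVec_apply {q : Type*} (C : Matrix q n R) (y : l → n → R) (j : l) (k : q) :
    (((1 : Matrix l l R) ⊗ₖ C) *ᵥ fun r => y r.1 r.2) (j, k) = (C *ᵥ y j) k := by
  simp [mulVec, dotProduct, Fintype.sum_prod_type, one_apply, ite_mul]

end OneKronecker

theorem GLS_eq_OLS_of_common_design_general
    {n m p₀ : ℕ}
    (X₀ : Matrix (Fin n) (Fin p₀) ℝ) (hX₀ : IsUnit (X₀ᵀ * X₀).det)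
    (yv : Fin m → Fin n → ℝ)
    (Sig : Matrix (Fin m) (Fin m) ℝ) (hSig : Sig.PosDef) :
    IsUnit ((bigXCommon m X₀)ᵀ * (Sig⁻¹ ⊗ₖ (1 : Matrix (Fin n) (Fin n) ℝ)) *
        bigXCommon m X₀).det ∧
      ∀ (j : Fin m) (k : Fin p₀),
        (((bigXCommon m X₀)ᵀ * (Sig⁻¹ ⊗ₖ (1 : Matrix (Fin n) (Fin n) ℝ)) *
            bigXCommon m X₀)⁻¹.mulVec
          (((bigXCommon m X₀)ᵀ *
            (Sig⁻¹ ⊗ₖ (1 : Matrix (Fin n) (Fin n) ℝ))).mulVec fun r => yv r.1 r.2)) (j, k)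
        = ((X₀ᵀ * X₀)⁻¹.mulVec (X₀ᵀ.mulVec (yv j))) k := by
  have hW : IsUnit Sig⁻¹.det :=
    Sig.isUnit_nonsing_inv_det ((isUnit_iff_isUnit_det Sig).mp hSig.isUnit)
  rw [bigXCommon_eq_one_kronecker]
  refine ⟨?_, fun j k => ?_⟩
  · rw [transpose_mul_kronecker_one_mul, det_kronecker]
    exact (hW.pow _).mul (hX₀.pow _)
  · rw [mulVec_mulVec, gls_projection_one_kronecker hW, one_kronecker_mulVec_apply,
      ← mulVec_mulVec]

/-- **GLS coincides with blockwise least squares when all design matrices are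
identical**: for any symmetric positive definite `Σ`, `Xᵀ(Σ⁻¹ ⊗ I_n)X` is invertible
and the `j`-th block of `β̂_GLS` equals `(X₀ᵀX₀)⁻¹X₀ᵀy_j`. -/
theorem GLS_eq_OLS_of_common_design
    {n m p₀ : ℕ} (hm : 1 < m)
    (X₀ : Matrix (Fin n) (Fin p₀) ℝ) (hX₀ : IsUnit (X₀ᵀ * X₀).det)
    (yv : Fin m → Fin n → ℝ)
    (Sig : Matrix (Fin m) (Fin m) ℝ) (hSig : Sig.PosDef) :
    IsUnit ((bigXCommon m X₀)ᵀ * (Sig⁻¹ ⊗ₖ (1 : Matrix (Fin n) (Fin n) ℝ)) *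
        bigXCommon m X₀).det ∧
      ∀ (j : Fin m) (k : Fin p₀),
        (((bigXCommon m X₀)ᵀ * (Sig⁻¹ ⊗ₖ (1 : Matrix (Fin n) (Fin n) ℝ)) *
            bigXCommon m X₀)⁻¹.mulVec
          (((bigXCommon m X₀)ᵀ *
            (Sig⁻¹ ⊗ₖ (1 : Matrix (Fin n) (Fin n) ℝ))).mulVec fun r => yv r.1 r.2)) (j, k)
        = ((X₀ᵀ * X₀)⁻¹.mulVec (X₀ᵀ.mulVec (yv j))) k :=
  GLS_eq_OLS_of_common_design_general X₀ hX₀ yv Sig hSig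
end
end

section
/- Existence and uniqueness of the multivariate M-scale. Let ρ₀ be a ρ-function with tuning constant c₀, let 0 < δ₀ < ρ₀(c₀), and let d₁, …, d_n ≥ 0 be given (in the application, d_i = √(e_i(B)ᵀ G⁻¹ e_i(B)) for fixed B and positive definite G). Let k = #{i : d_i > 0} and assume (k/n) ρ₀(c₀) > δ₀. Then there exists a unique s > 0 such that (1/n) Σ_{i=1}^n ρ₀(d_i/s) = δ₀. -/
noncomputable section

/-- **Existence and uniqueness of the multivariate M-scale**: if
`(k/n) ρ₀(c₀) > δ₀` with `k = #{i : dᵢ > 0}`, then there is a unique `s > 0` with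
`(1/n) Σᵢ ρ₀(dᵢ/s) = δ₀`. -/
theorem M_scale_exists_unique
    (ρ₀ : ℝ → ℝ) (c₀ : ℝ) (hρ₀ : IsRhoFunction ρ₀ c₀)
    (δ₀ : ℝ) (hδ : 0 < δ₀ ∧ δ₀ < ρ₀ c₀)
    {n : ℕ} (d : Fin n → ℝ) (hd : ∀ i, 0 ≤ d i)
    (hk : δ₀ < (Nat.card {i : Fin n // 0 < d i} : ℝ) / (n : ℝ) * ρ₀ c₀) :
    ∃! s : ℝ, 0 < s ∧ (1 / (n : ℝ)) * ∑ i, ρ₀ (d i / s) = δ₀ := by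
  classical
  obtain ⟨hc, heven, hsmooth, h0, hmonoI, hconst⟩ := hρ₀
  obtain ⟨hδpos, hδlt⟩ := hδ
  have mono : ∀ x y : ℝ, 0 ≤ x → x ≤ y → ρ₀ x ≤ ρ₀ y := by
    intro x y hx hxy
    rcases le_or_gt y c₀ with hy | hy
    · exact hmonoI.monotoneOn ⟨hx, hxy.trans hy⟩ ⟨hx.trans hxy, hy⟩ hxy
    · rcases le_or_gt x c₀ with hxc | hxc
      · rw [hconst y hy.le]
        exact hmonoI.monotoneOn ⟨hx, hxc⟩ ⟨hc.le, le_rfl⟩ hxc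
      · rw [hconst y hy.le, hconst x hxc.le]
  have strict : ∀ x y : ℝ, 0 ≤ x → x < y → x < c₀ → ρ₀ x < ρ₀ y := by
    intro x y hx hxy hxc
    rcases le_or_gt y c₀ with hy | hy
    · exact hmonoI ⟨hx, hxc.le⟩ ⟨hx.trans hxy.le, hy⟩ hxy
    · rw [hconst y hy.le]
      exact hmonoI ⟨hx, hxc.le⟩ ⟨hc.le, le_rfl⟩ hxc
  have nonneg : ∀ x : ℝ, 0 ≤ x → 0 ≤ ρ₀ x := fun x hx => h0 ▸ mono 0 x le_rfl hx
  set T : Finset (Fin n) := Finset.univ.filter (fun i => 0 < d i) with hTdef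
  have hcard : (Nat.card {i : Fin n // 0 < d i} : ℝ) = (T.card : ℝ) := by
    rw [Nat.card_eq_fintype_card, Fintype.card_subtype]
  rw [hcard] at hk
  have hTne : T.Nonempty := by
    rcases T.eq_empty_or_nonempty with h | h
    · rw [h] at hk; simp at hk; linarith
    · exact h
  have hn : 0 < n := hTne.choose.pos
  have hnne : (n : ℝ) ≠ 0 := Nat.cast_ne_zero.mpr hn.ne'
  set f : ℝ → ℝ := fun s => (1 / (n : ℝ)) * ∑ i, ρ₀ (d i / s) with hfdef
  -- saturation: if all positive d i / s are ≥ c₀ then the sum saturates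
  have satur : ∀ s : ℝ, (∀ i ∈ T, c₀ ≤ d i / s) →
      ∑ i, ρ₀ (d i / s) = T.card * ρ₀ c₀ := by
    intro s hs
    have h1 : ∑ i ∈ T, ρ₀ (d i / s) = ∑ i, ρ₀ (d i / s) := by
      refine Finset.sum_subset (Finset.subset_univ T) ?_
      intro i _ hi
      have hdi : d i = 0 := by
        by_contra h
        exact hi (Finset.mem_filter.mpr
          ⟨Finset.mem_univ i, lt_of_le_of_ne (hd i) (Ne.symm h)⟩)
      simp [hdi, h0]
    rw [← h1, Finset.sum_congr rfl (fun i hi => hconst _ (hs i hi)),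
      Finset.sum_const, nsmul_eq_mul]
  -- small point
  set m : ℝ := T.inf' hTne d with hmdef
  have hm : 0 < m := (Finset.lt_inf'_iff hTne).mpr fun i hi => (Finset.mem_filter.mp hi).2
  set s₀ : ℝ := m / c₀ with hs₀def
  have hs₀pos : 0 < s₀ := div_pos hm hc
  have hsat : ∀ i ∈ T, c₀ ≤ d i / s₀ := by
    intro i hi
    rw [le_div_iff₀ hs₀pos, hs₀def]
    have : c₀ * (m / c₀) = m := by field_simp
    rw [this]
    exact Finset.inf'_le d hi
  have hfs₀ : δ₀ < f s₀ := by
    have : f s₀ = (T.card : ℝ) / n * ρ₀ c₀ := by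
      simp only [hfdef]
      rw [satur s₀ hsat]; ring
    rw [this]; exact hk
  -- large point
  have hcont : Continuous ρ₀ := hsmooth.continuous
  obtain ⟨t, htpos, ht⟩ : ∃ t > 0, ∀ x : ℝ, |x| < t → ρ₀ x < δ₀ := by
    obtain ⟨t, htpos, h⟩ := Metric.continuousAt_iff.mp (hcont.continuousAt (x := (0:ℝ))) δ₀ hδpos
    refine ⟨t, htpos, fun x hx => ?_⟩
    have h2 := h (x := x) (by simpa [Real.dist_eq, sub_zero] using hx)
    rw [h0, Real.dist_eq, sub_zero] at h2
    exact lt_of_le_of_lt (le_abs_self _) h2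
  set s₁ : ℝ := (∑ i, d i) / t + 1 with hs₁def
  have hSnn : 0 ≤ ∑ i, d i := Finset.sum_nonneg fun i _ => hd i
  have hs₁pos : 0 < s₁ := by positivity
  have hsmall : ∀ i, ρ₀ (d i / s₁) < δ₀ := by
    intro i
    apply ht
    rw [abs_of_nonneg (div_nonneg (hd i) hs₁pos.le), div_lt_iff₀ hs₁pos, hs₁def]
    have hle : d i ≤ ∑ j, d j := Finset.single_le_sum (fun j _ => hd j) (Finset.mem_univ i)
    have : t * ((∑ i, d i) / t + 1) = (∑ i, d i) + t := by field_simp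
    rw [this]
    linarith
  have hfs₁ : f s₁ < δ₀ := by
    have hsum : ∑ i, ρ₀ (d i / s₁) < n * δ₀ := by
      calc ∑ i, ρ₀ (d i / s₁) < ∑ _i : Fin n, δ₀ :=
            Finset.sum_lt_sum_of_nonempty (Finset.univ_nonempty_iff.mpr
              ⟨hTne.choose⟩) (fun i _ => hsmall i)
        _ = n * δ₀ := by simp [mul_comm]
    have h1n : (0 : ℝ) < 1 / n := by positivity
    calc f s₁ = 1 / n * ∑ i, ρ₀ (d i / s₁) := rfl
      _ < 1 / n * (n * δ₀) := by exact mul_lt_mul_of_pos_left hsum h1n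
      _ = δ₀ := by field_simp
  -- everything in the interval is positive
  have hpos_int : Set.uIcc s₀ s₁ ⊆ {s : ℝ | 0 < s} := by
    intro x hx
    rcases Set.mem_uIcc.mp hx with ⟨h1, _⟩ | ⟨h1, _⟩
    · exact lt_of_lt_of_le hs₀pos h1
    · exact lt_of_lt_of_le hs₁pos h1
  have hfcont : ContinuousOn f (Set.uIcc s₀ s₁) := by
    apply ContinuousOn.mul continuousOn_const
    apply continuousOn_finset_sum
    intro i _
    apply hcont.comp_continuousOn
    apply ContinuousOn.div continuousOn_const continuousOn_id
    intro x hx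
    exact (hpos_int hx).ne'
  have hmem : δ₀ ∈ Set.uIcc (f s₀) (f s₁) :=
    Set.mem_uIcc.mpr (Or.inr ⟨hfs₁.le, hfs₀.le⟩)
  obtain ⟨s, hsmem, hfs⟩ := intermediate_value_uIcc hfcont hmem
  have hspos : 0 < s := hpos_int hsmem
  -- key strict monotonicity fact for uniqueness
  have key : ∀ a b : ℝ, 0 < a → a < b → f b = δ₀ → δ₀ < f a := by
    intro a b ha hab hfb
    have hbpos : 0 < b := ha.trans hab
    -- there is i₀ with d i₀ > 0 and d i₀ / b < c₀
    obtain ⟨i₀, hi₀T, hi₀lt⟩ : ∃ i₀ ∈ T, d i₀ / b < c₀ := by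
      by_contra h
      push_neg at h
      have : f b = (T.card : ℝ) / n * ρ₀ c₀ := by
        simp only [hfdef]
        rw [satur b h]; ring
      rw [hfb] at this
      linarith [hk, this]
    have hdi₀ : 0 < d i₀ := (Finset.mem_filter.mp hi₀T).2
    have hsum : ∑ i, ρ₀ (d i / b) < ∑ i, ρ₀ (d i / a) := by
      refine Finset.sum_lt_sum (fun j _ => ?_) ⟨i₀, Finset.mem_univ i₀, ?_⟩
      · exact mono _ _ (div_nonneg (hd j) hbpos.le) (by gcongr; exact hd j)
      · exact strict _ _ (div_nonneg (hd i₀) hbpos.le) (by gcongr) hi₀lt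
    have h1n : (0 : ℝ) < 1 / n := by positivity
    calc δ₀ = f b := hfb.symm
      _ < f a := mul_lt_mul_of_pos_left hsum h1n
  refine ⟨s, ⟨hspos, hfs⟩, ?_⟩
  intro y hy
  obtain ⟨hypos, hyf⟩ := hy
  have hyf' : f y = δ₀ := hyf
  rcases lt_trichotomy y s with h | h | h
  · linarith [key y s hypos h hfs]
  · exact h
  · linarith [key s y hspos h hyf']
end
end

section
/- First-order conditions (fixed-point equations) for MM-estimators in the SUR model. Let ρ₁ be a ρ-function, ψ₁ = ρ₁', w₁(u) = ψ₁(u)/u, and let σ̃ > 0 be a given scale. Suppose (B̂, Ĝ) is a local minimizer of (1/n) Σ_{i=1}^n ρ₁(√(e_i(B)ᵀ G⁻¹ e_i(B))/σ̃) over block-diagonal B ∈ ℝ^{p×m} and symmetric positive definite G with det G = 1. Set Σ̂ = σ̃² Ĝ, d_i = √(e_i(B̂)ᵀ Σ̂⁻¹ e_i(B̂)), assume d_i > 0 for all i, let D = diag(w₁(d₁),…,w₁(d_n)), assume Σ_{i=1}^n ψ₁(d_i) d_i ≠ 0 and that Xᵀ(Σ̂⁻¹ ⊗ D)X is invertible,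 where X = bdiag(X₁,…,X_m) ∈ ℝ^{nm×p}, y = (y₁ᵀ,…,y_mᵀ)ᵀ ∈ ℝ^{nm}, and Σ̂⁻¹ ⊗ D acts on coordinates indexed by (block, observation). Then the stacked coefficient vector β̂ of B̂ satisfies β̂ = (Xᵀ(Σ̂⁻¹ ⊗ D)X)⁻¹ Xᵀ(Σ̂⁻¹ ⊗ D) y, and Σ̂ = m · (Y − X̃B̂)ᵀ D (Y − X̃B̂) / (Σ_{i=1}^n ψ₁(d_i) d_i). -/
/-!
At a constrained local minimum the objective has zero derivative along every differentiable
curve that stays in the constraint set. Moving the coefficients along `β̂ + t v` and using the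
symmetry of `Ĝ⁻¹` gives `Σᵢ w₁(dᵢ) uᵢᵀ Σ̂⁻¹ eᵢ = 0` for every `v`, where `uᵢ` are the rows of
the fitted values of `v`; these are exactly the weighted normal equations
`Xᵀ(Σ̂⁻¹ ⊗ D)(y − Xβ̂) = 0`. For the shape, every matrix `L` gives the curve
`t ↦ c(t) ((1 + tL) Ĝ⁻¹ (1 + tL)ᵀ)⁻¹` of positive definite matrices, with the scalar `c(t)`
keeping the determinant equal to one; since `d/dt det(1 + tL) = tr L` at `t = 0`, the
derivative gives `tr (L Ĝ⁻¹ EᵀDE) = tr L · σ̃² Σᵢ ψ₁(dᵢ)dᵢ / m` for every `L`, so that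
`Ĝ⁻¹ EᵀDE` is the scalar matrix `σ̃² Σᵢ ψ₁(dᵢ)dᵢ / m`.
-/

open Matrix

noncomputable section

open Kronecker

/-- The stacked block-diagonal design matrix `X = bdiag(X₁,…,X_m) ∈ ℝ^{nm×p}`, with rows
indexed by pairs `(j, i)` of block and observation. -/
def bigXS {n m : ℕ} {pdim : Fin m → ℕ} (X : Matrix (Fin n) (SURIdx m pdim) ℝ) :
    Matrix (Fin m × Fin n) (SURIdx m pdim) ℝ :=
  Matrix.of fun r q => if r.1 = q.1 then X r.2 q else 0

/-- The MM objective `(1/n) Σᵢ ρ₁(√(eᵢ(B)ᵀ G⁻¹ eᵢ(B))/σ̃)`. -/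
def MMobj {n m : ℕ} {pdim : Fin m → ℕ} (ρ₁ : ℝ → ℝ) (σ : ℝ)
    (X : Matrix (Fin n) (SURIdx m pdim) ℝ) (Y : Matrix (Fin n) (Fin m) ℝ)
    (b : SURIdx m pdim → ℝ) (G : Matrix (Fin m) (Fin m) ℝ) : ℝ :=
  (1 / (n : ℝ)) * ∑ i, ρ₁ (Real.sqrt (resid X Y b i ⬝ᵥ G⁻¹.mulVec (resid X Y b i)) / σ)

open Filter Topology

section MatrixAlgebra

variable {ι κ R : Type*} [Fintype ι] [CommSemiring R]

theorem Matrix.dotProduct_mul_mul_transpose_mulVec (K A : Matrix ι ι R) (e : ι → R) :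
    e ⬝ᵥ (K * A * Kᵀ) *ᵥ e = (Kᵀ *ᵥ e) ⬝ᵥ A *ᵥ (Kᵀ *ᵥ e) := by
  rw [← mulVec_mulVec, ← mulVec_mulVec, dotProduct_mulVec, ← mulVec_transpose]

theorem Matrix.IsSymm.dotProduct_mulVec_comm {A : Matrix ι ι R} (hA : A.IsSymm) (u v : ι → R) :
    u ⬝ᵥ A *ᵥ v = v ⬝ᵥ A *ᵥ u := by
  rw [dotProduct_mulVec, ← mulVec_transpose, hA.eq, dotProduct_comm]

variable [Fintype κ] [DecidableEq κ]

theorem Matrix.vec_dotProduct_kronecker_diagonal_mulVec_vec (U E : Matrix κ ι R)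
    (A : Matrix ι ι R) (w : κ → R) :
    vec U ⬝ᵥ (A ⊗ₖ diagonal w) *ᵥ vec E = ∑ i, w i * (U i ⬝ᵥ A *ᵥ E i) := by
  rw [kronecker_mulVec_vec, vec_dotProduct_vec]
  simp only [trace, diag, mul_apply, transpose_apply, diagonal_apply, ite_mul, zero_mul,
    Finset.sum_ite_eq, Finset.mem_univ, if_true, dotProduct, mulVec, Finset.mul_sum]
  rw [Finset.sum_comm]
  refine Finset.sum_congr rfl fun i _ => Finset.sum_congr rfl fun a _ =>
    Finset.sum_congr rfl fun b _ => ?_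
  ring

theorem Matrix.sum_mul_dotProduct_mulVec_eq_trace (E : Matrix κ ι R) (w : κ → R)
    (M : Matrix ι ι R) :
    ∑ i, w i * (E i ⬝ᵥ M *ᵥ E i) = (M * (Eᵀ * diagonal w * E)).trace := by
  rw [← vec_dotProduct_kronecker_diagonal_mulVec_vec, kronecker_mulVec_vec, vec_dotProduct_vec,
    ← trace_transpose]
  simp only [transpose_mul, transpose_transpose, diagonal_transpose, Matrix.mul_assoc]

variable [DecidableEq ι]

theorem Matrix.ext_of_forall_trace_mul_eq {M N : Matrix ι ι R}
    (h : ∀ L : Matrix ι ι R, (L * M).trace = (L * N).trace) : M = N := by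
  ext i j
  simpa [trace_single_mul] using h (single j i 1)

theorem Matrix.mul_transpose_mul_diagonal_mul_eq_smul_one {E : Matrix κ ι R} {w : κ → R}
    {S : Matrix ι ι R} {c : R}
    (h : ∀ L : Matrix ι ι R, ∑ i, w i * (E i ⬝ᵥ (L * S) *ᵥ E i) = L.trace * c) :
    S * (Eᵀ * diagonal w * E) = c • 1 :=
  ext_of_forall_trace_mul_eq fun L => by
    rw [← Matrix.mul_assoc, ← sum_mul_dotProduct_mulVec_eq_trace, h, Matrix.mul_smul,
      Matrix.mul_one, trace_smul, smul_eq_mul, mul_comm]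

end MatrixAlgebra

theorem Matrix.inv_smul_of_ne_zero {ι K : Type*} [Fintype ι] [DecidableEq ι] [Field K] {k : K}
    (hk : k ≠ 0) {A : Matrix ι ι K} (hA : IsUnit A.det) : (k • A)⁻¹ = k⁻¹ • A⁻¹ :=
  inv_eq_left_inv (by rw [smul_mul_smul_comm, inv_mul_cancel₀ hk, nonsing_inv_mul _ hA, one_smul])

theorem Matrix.PosDef.dotProduct_inv_mulVec_eq_sq_of_eq_sqrt {ι : Type*} [Fintype ι]
    [DecidableEq ι] {G : Matrix ι ι ℝ} (hG : G.PosDef) {σ δ : ℝ} (hσ : σ ≠ 0) {e : ι → ℝ}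
    (hδ : δ = Real.sqrt (e ⬝ᵥ (σ ^ 2 • G)⁻¹ *ᵥ e)) : e ⬝ᵥ G⁻¹ *ᵥ e = σ ^ 2 * δ ^ 2 := by
  have hnn : 0 ≤ e ⬝ᵥ G⁻¹ *ᵥ e := by simpa using hG.inv.posSemidef.dotProduct_mulVec_nonneg e
  rw [hδ, inv_smul_of_ne_zero (by positivity) hG.det_pos.ne'.isUnit, smul_mulVec, dotProduct_smul,
    smul_eq_mul, Real.sq_sqrt (by positivity)]
  field_simp

theorem HasDerivAt.dotProduct_mulVec {ι : Type*} [Fintype ι] {x y : ℝ → ι → ℝ}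
    {x' y' : ι → ℝ} {t : ℝ} (hx : HasDerivAt x x' t) (hy : HasDerivAt y y' t)
    (A : Matrix ι ι ℝ) :
    HasDerivAt (fun s => x s ⬝ᵥ A *ᵥ y s) (x' ⬝ᵥ A *ᵥ y t + x t ⬝ᵥ A *ᵥ y') t := by
  rw [hasDerivAt_pi] at hx hy
  have hAy : ∀ a, HasDerivAt (fun s => (A *ᵥ y s) a) ((A *ᵥ y') a) t := fun a =>
    HasDerivAt.fun_sum fun b _ => (hy b).const_mul (A a b)
  have := HasDerivAt.fun_sum fun a (_ : a ∈ Finset.univ) => (hx a).fun_mul (hAy a)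
  simpa only [dotProduct, Finset.sum_add_distrib] using this

theorem hasDerivAt_comp_sqrt_div {ρ q : ℝ → ℝ} {q' σ d x : ℝ} (hρ : DifferentiableAt ℝ ρ d)
    (hσ : 0 < σ) (hd : 0 < d) (hq : HasDerivAt q q' x) (hqx : q x = σ ^ 2 * d ^ 2) :
    HasDerivAt (fun t => ρ (Real.sqrt (q t) / σ)) (deriv ρ d * q' / (2 * σ ^ 2 * d)) x := by
  have hsqrt : Real.sqrt (q x) = σ * d := by
    rw [hqx, ← mul_pow, Real.sqrt_sq (by positivity)]
  have hinner := (hq.sqrt (by rw [hqx]; positivity)).div_const σ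
  have hρ' : HasDerivAt ρ (deriv ρ d) (Real.sqrt (q x) / σ) := by
    rw [hsqrt, mul_div_cancel_left₀ _ hσ.ne']
    exact hρ.hasDerivAt
  refine (hρ'.comp x hinner).congr_deriv ?_
  rw [hsqrt]
  field_simp

theorem IsLocalMinOn.isLocalMin_comp {α : Type*} [TopologicalSpace α] {f : α → ℝ} {s : Set α}
    {a : α} (hf : IsLocalMinOn f s a) {γ : ℝ → α} (hγ0 : γ 0 = a) (hγ : ContinuousAt γ 0)
    (hs : ∀ᶠ t in 𝓝 0, γ t ∈ s) : IsLocalMin (f ∘ γ) 0 := by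
  subst hγ0
  exact hf.comp_tendsto (tendsto_nhdsWithin_iff.mpr ⟨hγ, hs⟩)

section UnimodularCongrCurve

variable {ι : Type*} [Fintype ι] [DecidableEq ι] {G₀ : Matrix ι ι ℝ} (L : Matrix ι ι ℝ)

theorem hasDerivAt_det_one_add_smul :
    HasDerivAt (fun t : ℝ => (1 + t • L).det) L.trace 0 := by
  set P := (Matrix.det (1 + (Polynomial.X : Polynomial ℝ) • L.map Polynomial.C)).divX.divX
  have hexp : (fun t : ℝ => (1 + t • L).det) = fun t => 1 + L.trace * t + P.eval t * t ^ 2 :=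
    funext fun t => Matrix.det_one_add_smul t L
  rw [hexp]
  have hlin : HasDerivAt (fun t : ℝ => 1 + L.trace * t) L.trace 0 := by
    simpa using ((hasDerivAt_id (0 : ℝ)).const_mul L.trace).const_add 1
  have hquad : HasDerivAt (fun t => P.eval t * t ^ 2) 0 0 := by
    simpa using (P.hasDerivAt 0).fun_mul (hasDerivAt_pow 2 (0 : ℝ))
  simpa using hlin.fun_add hquad

theorem eventually_det_one_add_smul_ne_zero : ∀ᶠ t in 𝓝 (0 : ℝ), (1 + t • L).det ≠ 0 :=
  (hasDerivAt_det_one_add_smul L).continuousAt.eventually_ne (by simp)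

/-- A curve through `G₀` of positive definite matrices of determinant `det G₀`, along which
`G⁻¹` starts in the direction `L G₀⁻¹ + G₀⁻¹ Lᵀ` modulo `G₀⁻¹`. -/
def unimodularCongrCurve (G₀ L : Matrix ι ι ℝ) (t : ℝ) : Matrix ι ι ℝ :=
  ((1 + t • L).det ^ 2) ^ (1 / Fintype.card ι : ℝ) • ((1 + t • L) * G₀⁻¹ * (1 + t • L)ᵀ)⁻¹

theorem det_one_add_smul_mul_mul_transpose (A : Matrix ι ι ℝ) (t : ℝ) :
    ((1 + t • L) * A * (1 + t • L)ᵀ).det = (1 + t • L).det ^ 2 * A.det := by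
  simp only [Matrix.det_mul, Matrix.det_transpose]
  ring

theorem unimodularCongrCurve_zero (hG₀ : IsUnit G₀.det) : unimodularCongrCurve G₀ L 0 = G₀ := by
  simp [unimodularCongrCurve, Matrix.nonsing_inv_nonsing_inv _ hG₀]

theorem continuousAt_unimodularCongrCurve (hG₀ : IsUnit G₀.det) :
    ContinuousAt (unimodularCongrCurve G₀ L) 0 := by
  have hK : Continuous fun t : ℝ => 1 + t • L :=
    continuous_const.add (continuous_id.smul continuous_const)
  have hH := (hK.matrix_mul (continuous_const (y := G₀⁻¹))).matrix_mul hK.matrix_transpose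
  refine ((hK.matrix_det.pow 2).continuousAt.rpow_const (Or.inl (by simp))).smul ?_
  refine (continuousAt_matrix_inv _ ?_).comp hH.continuousAt
  rw [Ring.inverse_eq_inv']
  exact continuousAt_inv₀ (by simpa [Matrix.det_nonsing_inv] using hG₀.ne_zero)

theorem inv_unimodularCongrCurve (hG₀ : IsUnit G₀.det) {t : ℝ} (ht : (1 + t • L).det ≠ 0) :
    (unimodularCongrCurve G₀ L t)⁻¹ = (((1 + t • L).det ^ 2) ^ (1 / Fintype.card ι : ℝ))⁻¹ •
      ((1 + t • L) * G₀⁻¹ * (1 + t • L)ᵀ) := by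
  have hH : IsUnit ((1 + t • L) * G₀⁻¹ * (1 + t • L)ᵀ).det := by
    rw [det_one_add_smul_mul_mul_transpose, Matrix.det_nonsing_inv, Ring.inverse_eq_inv']
    exact (mul_ne_zero (pow_ne_zero 2 ht) (inv_ne_zero hG₀.ne_zero)).isUnit
  rw [unimodularCongrCurve, Matrix.inv_smul_of_ne_zero (Real.rpow_pos_of_pos (by positivity) _).ne'
    (Matrix.isUnit_nonsing_inv_det _ hH), Matrix.nonsing_inv_nonsing_inv _ hH]

theorem det_unimodularCongrCurve [Nonempty ι] {t : ℝ} (ht : (1 + t • L).det ≠ 0) :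
    (unimodularCongrCurve G₀ L t).det = G₀.det := by
  have hδ : 0 < (1 + t • L).det ^ 2 := by positivity
  rw [unimodularCongrCurve, Matrix.det_smul, Matrix.det_nonsing_inv,
    det_one_add_smul_mul_mul_transpose, Matrix.det_nonsing_inv, Ring.inverse_eq_inv',
    ← Real.rpow_natCast, ← Real.rpow_mul hδ.le, one_div,
    inv_mul_cancel₀ (by simp [Fintype.card_ne_zero]), Real.rpow_one, mul_inv, inv_inv]
  field_simp

theorem posDef_unimodularCongrCurve (hG₀ : G₀.PosDef) {t : ℝ} (ht : (1 + t • L).det ≠ 0) :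
    (unimodularCongrCurve G₀ L t).PosDef := by
  have hK : IsUnit (1 + t • L) := (Matrix.isUnit_iff_isUnit_det _).mpr ht.isUnit
  have hH : ((1 + t • L) * G₀⁻¹ * (1 + t • L)ᵀ).PosDef := by
    simpa [star_eq_conjTranspose] using
      (Matrix.IsUnit.posDef_star_right_conjugate_iff hK).mpr hG₀.inv
  exact hH.inv.smul (Real.rpow_pos_of_pos (by positivity) _)

theorem hasDerivAt_dotProduct_inv_unimodularCongrCurve_mulVec (hG₀ : G₀.PosDef) (e : ι → ℝ) :
    HasDerivAt (fun t => e ⬝ᵥ (unimodularCongrCurve G₀ L t)⁻¹ *ᵥ e)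
      (2 * (e ⬝ᵥ (L * G₀⁻¹) *ᵥ e) - 2 * L.trace / Fintype.card ι * (e ⬝ᵥ G₀⁻¹ *ᵥ e)) 0 := by
  have hKT : HasDerivAt (fun t : ℝ => (1 + t • L)ᵀ *ᵥ e) (Lᵀ *ᵥ e) 0 := by
    have hlin : (fun t : ℝ => (1 + t • L)ᵀ *ᵥ e) = fun t => e + t • (Lᵀ *ᵥ e) :=
      funext fun t => by simp [Matrix.add_mulVec, Matrix.smul_mulVec]
    rw [hlin]
    simpa using ((hasDerivAt_id (0 : ℝ)).smul_const (Lᵀ *ᵥ e)).const_add e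
  have hscale : HasDerivAt (fun t : ℝ => (((1 + t • L).det ^ 2) ^ (1 / Fintype.card ι : ℝ))⁻¹)
      (-(2 * L.trace / Fintype.card ι)) 0 := by
    have hδ : HasDerivAt (fun t : ℝ => (1 + t • L).det ^ 2) (2 * L.trace) 0 := by
      simpa using (hasDerivAt_det_one_add_smul L).fun_pow 2
    refine ((hδ.rpow_const (p := 1 / Fintype.card ι) (Or.inl (by simp))).fun_inv
      (by simp)).congr_deriv ?_
    simp only [zero_smul, add_zero, Matrix.det_one, one_pow, Real.one_rpow]
    ring
  have hsymm : G₀⁻¹.IsSymm := hG₀.inv.isHermitian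
  have hL : Lᵀ *ᵥ e ⬝ᵥ G₀⁻¹ *ᵥ e = e ⬝ᵥ (L * G₀⁻¹) *ᵥ e := by
    rw [← Matrix.mulVec_mulVec, Matrix.mulVec_transpose]
    exact (Matrix.dotProduct_mulVec _ _ _).symm
  refine ((hscale.fun_mul (hKT.dotProduct_mulVec hKT G₀⁻¹)).congr_of_eventuallyEq ?_).congr_deriv ?_
  · filter_upwards [eventually_det_one_add_smul_ne_zero L] with t ht
    simp only [inv_unimodularCongrCurve L hG₀.det_pos.ne'.isUnit ht, Matrix.smul_mulVec,
      dotProduct_smul, smul_eq_mul, Matrix.dotProduct_mul_mul_transpose_mulVec]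
  · simp only [zero_smul, add_zero, Matrix.det_one, one_pow, Real.one_rpow, inv_one,
      Matrix.transpose_one, Matrix.one_mulVec, one_mul,
      hsymm.dotProduct_mulVec_comm e (Lᵀ *ᵥ e), hL]
    ring

end UnimodularCongrCurve

section SUR

variable {n m : ℕ} {pdim : Fin m → ℕ}

/-- The fitted values `X̃ B`, where `B` is the block-diagonal matrix with stacked coefficient
vector `b`. -/
def fitted (X : Matrix (Fin n) (SURIdx m pdim) ℝ) (b : SURIdx m pdim → ℝ) :
    Matrix (Fin n) (Fin m) ℝ :=
  Matrix.of fun i j => ∑ k : Fin (pdim j), X i ⟨j, k⟩ * b ⟨j, k⟩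

variable {X : Matrix (Fin n) (SURIdx m pdim) ℝ} {Y : Matrix (Fin n) (Fin m) ℝ}

theorem resid_add_smul (b v : SURIdx m pdim → ℝ) (t : ℝ) (i : Fin n) :
    resid X Y (b + t • v) i = resid X Y b i - t • fitted X v i := by
  ext j
  simp only [resid, fitted, Pi.add_apply, Pi.smul_apply, Pi.sub_apply, Matrix.of_apply,
    smul_eq_mul, mul_add, Finset.sum_add_distrib, Finset.mul_sum, mul_left_comm t]
  ring

theorem bigXS_mulVec (b : SURIdx m pdim → ℝ) : bigXS X *ᵥ b = vec (fitted X b) := by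
  ext ⟨j, i⟩
  simp only [bigXS, Matrix.mulVec, dotProduct, Matrix.of_apply, ite_mul, zero_mul, vec, fitted]
  rw [Fintype.sum_sigma, Finset.sum_eq_single j (fun j' _ hj' => by simp [Ne.symm hj']) (by simp)]
  simp

theorem eq_inv_mulVec_of_forall_sum_fitted_dotProduct_eq_zero {b : SURIdx m pdim → ℝ}
    {S : Matrix (Fin m) (Fin m) ℝ} {w : Fin n → ℝ}
    (h : ∀ v, ∑ i, w i * (fitted X v i ⬝ᵥ S *ᵥ resid X Y b i) = 0)
    (hinv : IsUnit ((bigXS X)ᵀ * (S ⊗ₖ Matrix.diagonal w) * bigXS X).det) :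
    b = ((bigXS X)ᵀ * (S ⊗ₖ Matrix.diagonal w) * bigXS X)⁻¹ *ᵥ
      (((bigXS X)ᵀ * (S ⊗ₖ Matrix.diagonal w)) *ᵥ vec Y) := by
  set K := S ⊗ₖ Matrix.diagonal w
  have horth : ∀ v, v ⬝ᵥ (bigXS X)ᵀ *ᵥ (K *ᵥ vec (Y - fitted X b)) = 0 := fun v => by
    rw [Matrix.dotProduct_mulVec, Matrix.vecMul_transpose, bigXS_mulVec,
      Matrix.vec_dotProduct_kronecker_diagonal_mulVec_vec]
    exact h v
  have hnormal := dotProduct_self_eq_zero.mp (horth _)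
  rw [Matrix.vec_sub, ← bigXS_mulVec, Matrix.mulVec_sub, Matrix.mulVec_sub, sub_eq_zero,
    Matrix.mulVec_mulVec, Matrix.mulVec_mulVec, Matrix.mulVec_mulVec] at hnormal
  rw [hnormal, Matrix.mulVec_mulVec, Matrix.nonsing_inv_mul _ hinv, Matrix.one_mulVec]

variable {ρ : ℝ → ℝ} {σ : ℝ} {d : Fin n → ℝ}

theorem hasDerivAt_MMobj (hρ : Differentiable ℝ ρ) (hσ : 0 < σ) (hd : ∀ i, 0 < d i)
    {b : ℝ → SURIdx m pdim → ℝ} {G : ℝ → Matrix (Fin m) (Fin m) ℝ} {q' : Fin n → ℝ}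
    (hq0 : ∀ i, resid X Y (b 0) i ⬝ᵥ (G 0)⁻¹ *ᵥ resid X Y (b 0) i = σ ^ 2 * d i ^ 2)
    (hq : ∀ i, HasDerivAt (fun t => resid X Y (b t) i ⬝ᵥ (G t)⁻¹ *ᵥ resid X Y (b t) i)
      (q' i) 0) :
    HasDerivAt (fun t => MMobj ρ σ X Y (b t) (G t))
      (1 / n * ∑ i, deriv ρ (d i) * q' i / (2 * σ ^ 2 * d i)) 0 :=
  (HasDerivAt.fun_sum fun i _ =>
    hasDerivAt_comp_sqrt_div (hρ _) hσ (hd i) (hq i) (hq0 i)).const_mul _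

theorem sum_deriv_div_mul_eq_zero_of_isLocalMin (hρ : Differentiable ℝ ρ) (hσ : 0 < σ)
    (hd : ∀ i, 0 < d i) {b : ℝ → SURIdx m pdim → ℝ} {G : ℝ → Matrix (Fin m) (Fin m) ℝ}
    {q' : Fin n → ℝ} (hmin : IsLocalMin (fun t => MMobj ρ σ X Y (b t) (G t)) 0)
    (hq0 : ∀ i, resid X Y (b 0) i ⬝ᵥ (G 0)⁻¹ *ᵥ resid X Y (b 0) i = σ ^ 2 * d i ^ 2)
    (hq : ∀ i, HasDerivAt (fun t => resid X Y (b t) i ⬝ᵥ (G t)⁻¹ *ᵥ resid X Y (b t) i)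
      (q' i) 0) :
    ∑ i, deriv ρ (d i) / d i * q' i = 0 := by
  have hzero := hmin.hasDerivAt_eq_zero (hasDerivAt_MMobj hρ hσ hd hq0 hq)
  rcases eq_or_ne n 0 with rfl | hn
  · simp
  have hrescale : 1 / n * ∑ i, deriv ρ (d i) * q' i / (2 * σ ^ 2 * d i)
      = 1 / (2 * n * σ ^ 2) * ∑ i, deriv ρ (d i) / d i * q' i := by
    simp only [Finset.mul_sum]
    refine Finset.sum_congr rfl fun i _ => ?_
    field_simp [(hd i).ne']
  rw [hrescale] at hzero
  exact (mul_eq_zero.mp hzero).resolve_left (by positivity)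

def IsMMLocalMin (ρ : ℝ → ℝ) (σ : ℝ) (X : Matrix (Fin n) (SURIdx m pdim) ℝ)
    (Y : Matrix (Fin n) (Fin m) ℝ) (b₀ : SURIdx m pdim → ℝ) (G₀ : Matrix (Fin m) (Fin m) ℝ) :
    Prop :=
  IsLocalMinOn (fun p : (SURIdx m pdim → ℝ) × Matrix (Fin m) (Fin m) ℝ => MMobj ρ σ X Y p.1 p.2)
    {p | p.2.PosDef ∧ p.2.det = 1} (b₀, G₀)

variable {b₀ : SURIdx m pdim → ℝ} {G₀ : Matrix (Fin m) (Fin m) ℝ}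

theorem IsMMLocalMin.sum_fitted_dotProduct_eq_zero (hmin : IsMMLocalMin ρ σ X Y b₀ G₀)
    (hρ : Differentiable ℝ ρ) (hσ : 0 < σ) (hG₀ : G₀.PosDef) (hdet : G₀.det = 1)
    (hd : ∀ i, 0 < d i)
    (hq0 : ∀ i, resid X Y b₀ i ⬝ᵥ G₀⁻¹ *ᵥ resid X Y b₀ i = σ ^ 2 * d i ^ 2)
    (v : SURIdx m pdim → ℝ) :
    ∑ i, deriv ρ (d i) / d i * (fitted X v i ⬝ᵥ G₀⁻¹ *ᵥ resid X Y b₀ i) = 0 := by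
  have hline : IsLocalMin (fun t : ℝ => MMobj ρ σ X Y (b₀ + t • v) G₀) 0 :=
    hmin.isLocalMin_comp (γ := fun t => (b₀ + t • v, G₀)) (by simp) (by fun_prop)
      (.of_forall fun _ => ⟨hG₀, hdet⟩)
  have hres : ∀ i, HasDerivAt (fun t : ℝ => resid X Y (b₀ + t • v) i) (-fitted X v i) 0 := by
    intro i
    simp only [resid_add_smul]
    simpa using ((hasDerivAt_id (0 : ℝ)).smul_const (fitted X v i)).const_sub (resid X Y b₀ i)
  have hstat := sum_deriv_div_mul_eq_zero_of_isLocalMin hρ hσ hd hline (by simpa using hq0)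
    fun i => (hres i).dotProduct_mulVec (hres i) G₀⁻¹
  have hsymm : G₀⁻¹.IsSymm := hG₀.inv.isHermitian
  have hterm : ∀ i, deriv ρ (d i) / d i * (-fitted X v i ⬝ᵥ G₀⁻¹ *ᵥ resid X Y b₀ i +
      resid X Y b₀ i ⬝ᵥ G₀⁻¹ *ᵥ -fitted X v i)
      = -2 * (deriv ρ (d i) / d i * (fitted X v i ⬝ᵥ G₀⁻¹ *ᵥ resid X Y b₀ i)) := fun i => by
    rw [hsymm.dotProduct_mulVec_comm (resid X Y b₀ i), neg_dotProduct]
    ring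
  simp only [zero_smul, add_zero] at hstat
  rw [Finset.sum_congr rfl fun i _ => hterm i, ← Finset.mul_sum] at hstat
  simpa using hstat

theorem IsMMLocalMin.sum_dotProduct_mul_mulVec_eq [NeZero m]
    (hmin : IsMMLocalMin ρ σ X Y b₀ G₀) (hρ : Differentiable ℝ ρ) (hσ : 0 < σ)
    (hG₀ : G₀.PosDef) (hdet : G₀.det = 1) (hd : ∀ i, 0 < d i)
    (hq0 : ∀ i, resid X Y b₀ i ⬝ᵥ G₀⁻¹ *ᵥ resid X Y b₀ i = σ ^ 2 * d i ^ 2)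
    (L : Matrix (Fin m) (Fin m) ℝ) :
    ∑ i, deriv ρ (d i) / d i * (resid X Y b₀ i ⬝ᵥ (L * G₀⁻¹) *ᵥ resid X Y b₀ i)
      = L.trace * (σ ^ 2 * (∑ i, deriv ρ (d i) * d i) / m) := by
  have hG₀u : IsUnit G₀.det := hG₀.det_pos.ne'.isUnit
  have hcurve : IsLocalMin (fun t => MMobj ρ σ X Y b₀ (unimodularCongrCurve G₀ L t)) 0 :=
    hmin.isLocalMin_comp (γ := fun t => (b₀, unimodularCongrCurve G₀ L t))
      (by simp [unimodularCongrCurve_zero L hG₀u])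
      (continuousAt_const.prodMk (continuousAt_unimodularCongrCurve L hG₀u))
      (by
        filter_upwards [eventually_det_one_add_smul_ne_zero L] with t ht
        exact ⟨posDef_unimodularCongrCurve L hG₀ ht, (det_unimodularCongrCurve L ht).trans hdet⟩)
  have hstat := sum_deriv_div_mul_eq_zero_of_isLocalMin hρ hσ hd hcurve
    (by simpa [unimodularCongrCurve_zero L hG₀u] using hq0)
    fun i => hasDerivAt_dotProduct_inv_unimodularCongrCurve_mulVec L hG₀ (resid X Y b₀ i)
  have hterm : ∀ i, deriv ρ (d i) / d i * (2 * (resid X Y b₀ i ⬝ᵥ (L * G₀⁻¹) *ᵥ resid X Y b₀ i)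
      - 2 * L.trace / Fintype.card (Fin m) * (resid X Y b₀ i ⬝ᵥ G₀⁻¹ *ᵥ resid X Y b₀ i))
      = 2 * (deriv ρ (d i) / d i * (resid X Y b₀ i ⬝ᵥ (L * G₀⁻¹) *ᵥ resid X Y b₀ i))
        - 2 * (L.trace * σ ^ 2 / m) * (deriv ρ (d i) * d i) := fun i => by
    rw [hq0, Fintype.card_fin]
    field_simp [(hd i).ne']
  rw [Finset.sum_congr rfl fun i _ => hterm i, Finset.sum_sub_distrib, ← Finset.mul_sum,
    ← Finset.mul_sum] at hstat
  linear_combination hstat / 2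

theorem IsMMLocalMin.eq_inv_mulVec (hmin : IsMMLocalMin ρ σ X Y b₀ G₀)
    (hρ : Differentiable ℝ ρ) (hσ : 0 < σ) (hG₀ : G₀.PosDef) (hdet : G₀.det = 1)
    (hd : ∀ i, 0 < d i)
    (hq0 : ∀ i, resid X Y b₀ i ⬝ᵥ G₀⁻¹ *ᵥ resid X Y b₀ i = σ ^ 2 * d i ^ 2)
    (hinv : IsUnit ((bigXS X)ᵀ * ((σ ^ 2 • G₀)⁻¹ ⊗ₖ
      Matrix.diagonal fun i => deriv ρ (d i) / d i) * bigXS X).det) :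
    b₀ = ((bigXS X)ᵀ * ((σ ^ 2 • G₀)⁻¹ ⊗ₖ Matrix.diagonal fun i => deriv ρ (d i) / d i) *
        bigXS X)⁻¹ *ᵥ
      (((bigXS X)ᵀ * ((σ ^ 2 • G₀)⁻¹ ⊗ₖ Matrix.diagonal fun i => deriv ρ (d i) / d i)) *ᵥ
        vec Y) := by
  refine eq_inv_mulVec_of_forall_sum_fitted_dotProduct_eq_zero (fun v => ?_) hinv
  simp only [Matrix.inv_smul_of_ne_zero (pow_ne_zero 2 hσ.ne') hG₀.det_pos.ne'.isUnit,
    Matrix.smul_mulVec, dotProduct_smul, smul_eq_mul, mul_left_comm _ (σ ^ 2)⁻¹,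
    ← Finset.mul_sum, hmin.sum_fitted_dotProduct_eq_zero hρ hσ hG₀ hdet hd hq0 v, mul_zero]

theorem IsMMLocalMin.transpose_mul_diagonal_mul_eq_smul [NeZero m]
    (hmin : IsMMLocalMin ρ σ X Y b₀ G₀) (hρ : Differentiable ℝ ρ) (hσ : 0 < σ)
    (hG₀ : G₀.PosDef) (hdet : G₀.det = 1) (hd : ∀ i, 0 < d i)
    (hq0 : ∀ i, resid X Y b₀ i ⬝ᵥ G₀⁻¹ *ᵥ resid X Y b₀ i = σ ^ 2 * d i ^ 2) :
    (Matrix.of fun i j => resid X Y b₀ i j)ᵀ * Matrix.diagonal (fun i => deriv ρ (d i) / d i) *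
      (Matrix.of fun i j => resid X Y b₀ i j)
      = (σ ^ 2 * (∑ i, deriv ρ (d i) * d i) / m) • G₀ := by
  have hGA := Matrix.mul_transpose_mul_diagonal_mul_eq_smul_one
    (E := Matrix.of fun i j => resid X Y b₀ i j)
    (hmin.sum_dotProduct_mul_mulVec_eq hρ hσ hG₀ hdet hd hq0)
  rw [← Matrix.mul_nonsing_inv_cancel_left G₀ ((Matrix.of fun i j => resid X Y b₀ i j)ᵀ *
    Matrix.diagonal (fun i => deriv ρ (d i) / d i) * (Matrix.of fun i j => resid X Y b₀ i j))
    hG₀.det_pos.ne'.isUnit, hGA, Matrix.mul_smul, Matrix.mul_one]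

end SUR

/-- **First-order conditions (fixed-point equations) for MM-estimators in the SUR
model**: a local minimizer `(B̂, Ĝ)` of the MM objective over block-diagonal `B` and
symmetric positive definite `G` with `det G = 1` satisfies, with `Σ̂ = σ̃² Ĝ`,
`β̂ = (Xᵀ(Σ̂⁻¹ ⊗ D)X)⁻¹ Xᵀ(Σ̂⁻¹ ⊗ D) y` and
`Σ̂ = m (Y − X̃B̂)ᵀ D (Y − X̃B̂) / Σᵢ ψ₁(dᵢ)dᵢ`. -/
theorem MM_estimator_first_order_conditions
    {n m : ℕ} (hm : 1 < m) {pdim : Fin m → ℕ}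
    (ρ₁ : ℝ → ℝ) (c₁ : ℝ) (hρ₁ : IsRhoFunction ρ₁ c₁)
    (w₁ : ℝ → ℝ) (hw₁ : ∀ u : ℝ, u ≠ 0 → w₁ u = deriv ρ₁ u / u)
    (σt : ℝ) (hσt : 0 < σt)
    (X : Matrix (Fin n) (SURIdx m pdim) ℝ) (Y : Matrix (Fin n) (Fin m) ℝ)
    (bh : SURIdx m pdim → ℝ) (Gh : Matrix (Fin m) (Fin m) ℝ)
    (hGpd : Gh.PosDef) (hGdet : Gh.det = 1)
    -- (B̂, Ĝ) locally minimizes the MM objective subject to the shape constraints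
    (hloc : ∀ᶠ bc : (SURIdx m pdim → ℝ) × (Fin m → Fin m → ℝ) in
        nhds (bh, fun i j => Gh i j),
      (Matrix.of bc.2).PosDef → (Matrix.of bc.2).det = 1 →
        MMobj ρ₁ σt X Y bh Gh ≤ MMobj ρ₁ σt X Y bc.1 (Matrix.of bc.2))
    -- Σ̂ = σ̃² Ĝ and the residual distances dᵢ, assumed positive
    (Sh : Matrix (Fin m) (Fin m) ℝ) (hSh : Sh = σt ^ 2 • Gh)
    (d : Fin n → ℝ)
    (hd : ∀ i, d i = Real.sqrt (resid X Y bh i ⬝ᵥ Sh⁻¹.mulVec (resid X Y bh i)))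
    (hdpos : ∀ i, 0 < d i)
    (hsum : ∑ i, deriv ρ₁ (d i) * d i ≠ 0)
    -- the weight matrix D
    (D : Matrix (Fin n) (Fin n) ℝ) (hD : D = Matrix.diagonal fun i => w₁ (d i))
    (hinv : IsUnit ((bigXS X)ᵀ * (Sh⁻¹ ⊗ₖ D) * bigXS X).det) :
    bh = ((bigXS X)ᵀ * (Sh⁻¹ ⊗ₖ D) * bigXS X)⁻¹.mulVec
        (((bigXS X)ᵀ * (Sh⁻¹ ⊗ₖ D)).mulVec fun r => Y r.2 r.1) ∧
      Sh = ((m : ℝ) / ∑ i, deriv ρ₁ (d i) * d i) •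
        ((Matrix.of fun i j => resid X Y bh i j)ᵀ * D *
          Matrix.of fun i j => resid X Y bh i j) := by
  have : NeZero m := ⟨by omega⟩
  have hρ : Differentiable ℝ ρ₁ := hρ₁.2.2.1.differentiable (by norm_num)
  have hmin : IsMMLocalMin ρ₁ σt X Y bh Gh := by
    rw [IsMMLocalMin, IsLocalMinOn, IsMinFilter, eventually_nhdsWithin_iff]
    exact hloc.mono fun p hp h => hp h.1 h.2
  subst hSh
  have hq0 : ∀ i, resid X Y bh i ⬝ᵥ Gh⁻¹ *ᵥ resid X Y bh i = σt ^ 2 * d i ^ 2 := fun i =>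
    hGpd.dotProduct_inv_mulVec_eq_sq_of_eq_sqrt hσt.ne' (hd i)
  have hweights : (fun i => w₁ (d i)) = fun i => deriv ρ₁ (d i) / d i :=
    funext fun i => hw₁ _ (hdpos i).ne'
  subst hD
  rw [hweights] at hinv ⊢
  refine ⟨hmin.eq_inv_mulVec hρ hσt hGpd hGdet hdpos hq0 hinv, ?_⟩
  rw [hmin.transpose_mul_diagonal_mul_eq_smul hρ hσt hGpd hGdet hdpos hq0, smul_smul]
  congr 1
  field_simp
end
end

section
/- Stationary points of the Gaussian log-likelihood of the SUR model satisfy the iterated FGLS equations. Let X = bdiag(X₁,…,X_m) ∈ ℝ^{nm×p}, y = (y₁ᵀ,…,y_mᵀ)ᵀ ∈ ℝ^{nm}, X̃ = (X₁,…,X_m), Y = (y₁,…,y_m), and define for β ∈ ℝ^p and symmetric positive definite Σ ∈ ℝ^{m×m} the log-likelihood l(β, Σ) = −(mn/2) ln(2π) − (n/2) ln(det Σ) − (1/2)(y − Xβ)ᵀ(Σ⁻¹ ⊗ I_n)(y − Xβ), where Σ⁻¹ ⊗ I_n acts on coordinates indexed by (block, observation). Suppose (β, Σ) is a stationary point of l,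 i.e. the derivative of l in β vanishes and the directional derivative of l at Σ along every symmetric matrix vanishes, and suppose Xᵀ(Σ⁻¹ ⊗ I_n)X is invertible. Then β = (Xᵀ(Σ⁻¹ ⊗ I_n)X)⁻¹ Xᵀ(Σ⁻¹ ⊗ I_n) y and Σ = (Y − X̃B)ᵀ(Y − X̃B)/n, where B is the block-diagonal arrangement of β. -/
open Matrix Kronecker

noncomputable section

/-! Both FGLS equations are first-order conditions. Along `β + t v` the log-likelihood is a
quadratic in `t` with slope `(X v)ᵀ A e` at `0`, where `A = Σ⁻¹ ⊗ I_n` is symmetric and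
`e = y − Xβ`; so `Xᵀ A e = 0`, which are the normal equations.
For `Σ`, write `e = vec R` with `R = Y − X̃B`, so that the quadratic form is `tr (Σ⁻¹ RᵀR)`.
Since `log det (Σ + tV)` and `(Σ + tV)⁻¹` have derivatives `tr (Σ⁻¹ V)` and `−Σ⁻¹ V Σ⁻¹`,
stationarity says `tr (V G) = 0` for every symmetric `V`, with `G = Σ⁻¹ (RᵀR − nΣ) Σ⁻¹`.
As `G` is itself symmetric, `V = G` gives `tr (Gᵀ G) = 0`, hence `G = 0` and `RᵀR = nΣ`. -/

section MatrixCalculus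

variable {n : Type*} [Fintype n] [DecidableEq n]

open Polynomial in
theorem hasDerivAt_det_one_add_smul_s17 {𝕜 : Type*} [NontriviallyNormedField 𝕜]
    (A : Matrix n n 𝕜) :
    HasDerivAt (fun t : 𝕜 => det (1 + t • A)) (trace A) 0 := by
  have := (det (1 + (X : 𝕜[X]) • A.map C)).hasDerivAt 0
  rw [derivative_det_one_add_X_smul] at this
  convert this using 2 with t
  simp [eval_det, ← smul_eq_mul_diagonal]

theorem hasDerivAt_det_add_smul {𝕜 : Type*} [NontriviallyNormedField 𝕜] {M : Matrix n n 𝕜}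
    (hM : IsUnit M.det) (V : Matrix n n 𝕜) :
    HasDerivAt (fun t : 𝕜 => det (M + t • V)) (det M * trace (M⁻¹ * V)) 0 := by
  have hfactor : ∀ t : 𝕜, M + t • V = M * (1 + t • (M⁻¹ * V)) := fun t => by
    rw [Matrix.mul_add, Matrix.mul_one, Matrix.mul_smul, mul_nonsing_inv_cancel_left _ _ hM]
  simp_rw [hfactor, det_mul]
  exact (hasDerivAt_det_one_add_smul_s17 _).const_mul _

theorem hasDerivAt_log_det_add_smul {M : Matrix n n ℝ} (hM : M.det ≠ 0) (V : Matrix n n ℝ) :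
    HasDerivAt (fun t : ℝ => Real.log (det (M + t • V))) (trace (M⁻¹ * V)) 0 := by
  simpa [hM] using (hasDerivAt_det_add_smul hM.isUnit V).log (by simpa using hM)

section Inverse

variable {𝕜 : Type*} [RCLike 𝕜]

-- Any matrix norm will do: it is needed only for `hasFDerivAt_ringInverse`, while the
-- statements use the product topology, which every matrix norm induces.
attribute [local instance] Matrix.linftyOpNormedRing Matrix.linftyOpNormedAlgebra

theorem hasDerivAt_inv_add_smul {M : Matrix n n 𝕜} (hM : IsUnit M.det) (V : Matrix n n 𝕜) :
    HasDerivAt (fun t : 𝕜 => (M + t • V)⁻¹) (-(M⁻¹ * V * M⁻¹)) 0 := by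
  have hline : HasDerivAt (fun t : 𝕜 => M + t • V) V 0 :=
    (((hasDerivAt_id (0 : 𝕜)).smul_const V).const_add M).congr_deriv (one_smul _ _)
  have hunit : IsUnit M := (isUnit_iff_isUnit_det M).mpr hM
  have := (hasFDerivAt_ringInverse (𝕜 := 𝕜) hunit.unit).comp_hasDerivAt_of_eq 0 hline (by simp)
  rw [← Ring.inverse_unit, IsUnit.unit_spec] at this
  simp only [Function.comp_def, _root_.neg_apply, ContinuousLinearMap.mulLeftRight_apply,
    ← nonsing_inv_eq_ringInverse] at this
  exact this

theorem hasDerivAt_trace_inv_add_smul_mul {M : Matrix n n 𝕜} (hM : IsUnit M.det)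
    (V S : Matrix n n 𝕜) :
    HasDerivAt (fun t : 𝕜 => trace ((M + t • V)⁻¹ * S)) (trace (-(M⁻¹ * V * M⁻¹) * S)) 0 :=
  (traceLinearMap n 𝕜 𝕜).toContinuousLinearMap.hasFDerivAt.comp_hasDerivAt 0
    ((hasDerivAt_inv_add_smul hM V).mul_const S)

end Inverse

end MatrixCalculus

theorem hasDerivAt_dotProduct_mulVec_sub_smul {ι 𝕜 : Type*} [Fintype ι]
    [NontriviallyNormedField 𝕜] (A : Matrix ι ι 𝕜) (u w : ι → 𝕜) :
    HasDerivAt (fun t : 𝕜 => (u - t • w) ⬝ᵥ A *ᵥ (u - t • w))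
      (-(w ⬝ᵥ A *ᵥ u + u ⬝ᵥ A *ᵥ w)) 0 := by
  have hexpand : ∀ t : 𝕜, (u - t • w) ⬝ᵥ A *ᵥ (u - t • w) =
      u ⬝ᵥ A *ᵥ u - t * (w ⬝ᵥ A *ᵥ u + u ⬝ᵥ A *ᵥ w) + t ^ 2 * (w ⬝ᵥ A *ᵥ w) := fun t => by
    simp only [mulVec_sub, mulVec_smul, sub_dotProduct, dotProduct_sub, smul_dotProduct,
      dotProduct_smul, smul_eq_mul]
    ring
  simp_rw [hexpand]
  have := (((hasDerivAt_id (0 : 𝕜)).mul_const (w ⬝ᵥ A *ᵥ u + u ⬝ᵥ A *ᵥ w)).const_sub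
    (u ⬝ᵥ A *ᵥ u)).fun_add ((hasDerivAt_pow 2 (0 : 𝕜)).mul_const (w ⬝ᵥ A *ᵥ w))
  simpa using this

theorem vec_dotProduct_kronecker_one_mulVec {m n R : Type*} [Fintype m] [Fintype n]
    [DecidableEq n] [CommRing R] (P : Matrix m m R) (A : Matrix n m R) :
    vec A ⬝ᵥ (P ⊗ₖ (1 : Matrix n n R)) *ᵥ vec A = trace (P * (Aᵀ * A)) := by
  rw [kronecker_mulVec_vec, vec_dotProduct_vec, Matrix.one_mul, ← Matrix.mul_assoc,
    ← trace_transpose]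
  simp only [transpose_mul, transpose_transpose]

theorem vec_sub_bigXS_mulVec {n m : ℕ} {pdim : Fin m → ℕ} (X : Matrix (Fin n) (SURIdx m pdim) ℝ)
    (Y : Matrix (Fin n) (Fin m) ℝ) (b : SURIdx m pdim → ℝ) :
    vec Y - bigXS X *ᵥ b = vec (of (resid X Y b)) := by
  ext ⟨j, i⟩
  simp only [vec, resid, bigXS, mulVec, dotProduct, Fintype.sum_sigma, ite_mul, zero_mul,
    Pi.sub_apply, of_apply]
  rw [Fintype.sum_eq_single j fun j' hj' => by simp [Ne.symm hj']]
  simp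

theorem transpose_mul_mulVec_sub_eq_zero_of_hasDerivAt_quadForm {ι κ : Type*} [Fintype ι]
    [Fintype κ] {A : Matrix ι ι ℝ} (hA : Aᵀ = A) (B : Matrix ι κ ℝ) (y : ι → ℝ) (b : κ → ℝ)
    {f : (κ → ℝ) → ℝ} {c : ℝ}
    (hf : ∀ b, f b = c - 1 / 2 * ((y - B *ᵥ b) ⬝ᵥ A *ᵥ (y - B *ᵥ b)))
    (hstat : ∀ v, HasDerivAt (fun t : ℝ => f (b + t • v)) 0 0) :
    (Bᵀ * A) *ᵥ (y - B *ᵥ b) = 0 := by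
  set e := y - B *ᵥ b
  have horth : ∀ v, (B *ᵥ v) ⬝ᵥ A *ᵥ e = 0 := fun v => by
    have hres : ∀ t : ℝ, y - B *ᵥ (b + t • v) = e - t • B *ᵥ v := fun t => by
      rw [mulVec_add, mulVec_smul, sub_add_eq_sub_sub]
    have hderiv := ((hasDerivAt_dotProduct_mulVec_sub_smul A e (B *ᵥ v)).const_mul
      (1 / 2 : ℝ)).const_sub c
    have h0 := hderiv.unique (by simpa only [hf, hres] using hstat v)
    rw [← dotProduct_transpose_mulVec A e, hA] at h0 ⊢
    linarith
  have hself : Bᵀ *ᵥ (A *ᵥ e) ⬝ᵥ Bᵀ *ᵥ (A *ᵥ e) = 0 := by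
    rw [dotProduct_transpose_mulVec, dotProduct_comm]
    exact horth _
  rw [← mulVec_mulVec]
  exact dotProduct_self_eq_zero.mp hself

theorem eq_smul_of_hasDerivAt_log_det_trace_inv {ι : Type*} [Fintype ι] [DecidableEq ι]
    {Sig S : Matrix ι ι ℝ} (hSig : Sigᵀ = Sig) (hdet : Sig.det ≠ 0) (hS : Sᵀ = S)
    {g : Matrix ι ι ℝ → ℝ} {c N : ℝ}
    (hg : ∀ M, g M = c - N / 2 * Real.log M.det - 1 / 2 * trace (M⁻¹ * S))
    (hstat : ∀ V, Vᵀ = V → HasDerivAt (fun t : ℝ => g (Sig + t • V)) 0 0) :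
    S = N • Sig := by
  have hunit : IsUnit Sig.det := hdet.isUnit
  set G := Sig⁻¹ * (S - N • Sig) * Sig⁻¹
  have htrace : ∀ V, Vᵀ = V → trace (V * G) = 0 := fun V hV => by
    have hderiv := (((hasDerivAt_log_det_add_smul hdet V).const_mul (N / 2)).const_sub c).fun_sub
      ((hasDerivAt_trace_inv_add_smul_mul hunit V S).const_mul (1 / 2 : ℝ))
    have h0 := hderiv.unique (by simpa only [hg] using hstat V hV)
    have hVG : trace (V * G) = trace (Sig⁻¹ * V * Sig⁻¹ * S) - N * trace (Sig⁻¹ * V) := by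
      simp only [G, Matrix.mul_sub, Matrix.sub_mul, Matrix.mul_smul, Matrix.smul_mul,
        nonsing_inv_mul _ hunit, Matrix.one_mul, trace_sub, trace_smul, smul_eq_mul,
        ← Matrix.mul_assoc]
      rw [trace_mul_comm _ Sig⁻¹, trace_mul_comm V, ← Matrix.mul_assoc, ← Matrix.mul_assoc]
    simp only [neg_mul, trace_neg] at h0
    rw [hVG]
    linarith
  have hGsymm : Gᵀ = G := by
    simp only [G, transpose_mul, transpose_sub, transpose_smul, transpose_nonsing_inv, hSig, hS,
      Matrix.mul_assoc]
  have hG : G = 0 := by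
    rw [← trace_conjTranspose_mul_self_eq_zero_iff, conjTranspose_eq_transpose_of_trivial, hGsymm]
    exact htrace G hGsymm
  have hSG : S - N • Sig = Sig * G * Sig := by
    simp only [G, ← Matrix.mul_assoc, mul_nonsing_inv _ hunit, Matrix.one_mul]
    rw [Matrix.mul_assoc, nonsing_inv_mul _ hunit, Matrix.mul_one]
  rwa [hG, Matrix.mul_zero, Matrix.zero_mul, sub_eq_zero] at hSG

theorem MLE_stationary_point_FGLS_general
    {n m : ℕ} (hn : 0 < n) {pdim : Fin m → ℕ}
    (X : Matrix (Fin n) (SURIdx m pdim) ℝ) (Y : Matrix (Fin n) (Fin m) ℝ)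
    -- the Gaussian log-likelihood
    (l : (SURIdx m pdim → ℝ) → Matrix (Fin m) (Fin m) ℝ → ℝ)
    (hl : ∀ (βv : SURIdx m pdim → ℝ) (Sm : Matrix (Fin m) (Fin m) ℝ),
      l βv Sm = -((m : ℝ) * (n : ℝ) / 2) * Real.log (2 * Real.pi)
        - ((n : ℝ) / 2) * Real.log Sm.det
        - (1 / 2) * (((fun r : Fin m × Fin n => Y r.2 r.1) - (bigXS X).mulVec βv) ⬝ᵥ
            ((Sm⁻¹ ⊗ₖ (1 : Matrix (Fin n) (Fin n) ℝ)).mulVec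
              ((fun r : Fin m × Fin n => Y r.2 r.1) - (bigXS X).mulVec βv))))
    -- the stationary point (β, Σ) with Σ symmetric positive definite
    (βv : SURIdx m pdim → ℝ) (Sig : Matrix (Fin m) (Fin m) ℝ) (hSig : Sig.PosDef)
    (hβstat : ∀ v : SURIdx m pdim → ℝ, HasDerivAt (fun t : ℝ => l (βv + t • v) Sig) 0 0)
    (hSigstat : ∀ V : Matrix (Fin m) (Fin m) ℝ, Vᵀ = V →
      HasDerivAt (fun t : ℝ => l βv (Sig + t • V)) 0 0)
    (hinv : IsUnit ((bigXS X)ᵀ * (Sig⁻¹ ⊗ₖ (1 : Matrix (Fin n) (Fin n) ℝ)) *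
      bigXS X).det) :
    βv = ((bigXS X)ᵀ * (Sig⁻¹ ⊗ₖ (1 : Matrix (Fin n) (Fin n) ℝ)) * bigXS X)⁻¹.mulVec
        (((bigXS X)ᵀ * (Sig⁻¹ ⊗ₖ (1 : Matrix (Fin n) (Fin n) ℝ))).mulVec
          fun r => Y r.2 r.1) ∧
      Sig = ((n : ℝ))⁻¹ • ((Matrix.of fun i j => resid X Y βv i j)ᵀ *
        Matrix.of fun i j => resid X Y βv i j) := by
  have hSigT : Sigᵀ = Sig := by
    simpa [conjTranspose_eq_transpose_of_trivial] using hSig.isHermitian.eq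
  have hkronT : (Sig⁻¹ ⊗ₖ (1 : Matrix (Fin n) (Fin n) ℝ))ᵀ = Sig⁻¹ ⊗ₖ 1 := by
    rw [← kroneckerMap_transpose, transpose_nonsing_inv, hSigT, transpose_one]
  constructor
  · have hnormal := transpose_mul_mulVec_sub_eq_zero_of_hasDerivAt_quadForm hkronT (bigXS X)
      _ βv (fun b => hl b Sig) hβstat
    rw [mulVec_sub, sub_eq_zero, mulVec_mulVec] at hnormal
    rw [hnormal, mulVec_mulVec, nonsing_inv_mul _ hinv, one_mulVec]
  · set R := of fun i j => resid X Y βv i j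
    have hlR : ∀ M, l βv M = -((m : ℝ) * (n : ℝ) / 2) * Real.log (2 * Real.pi)
        - (n : ℝ) / 2 * Real.log M.det - 1 / 2 * trace (M⁻¹ * (Rᵀ * R)) := fun M => by
      rw [hl, ← vec_dotProduct_kronecker_one_mulVec, ← vec_sub_bigXS_mulVec]
      rfl
    have hRR : (Rᵀ * R)ᵀ = Rᵀ * R := by rw [transpose_mul, transpose_transpose]
    rw [eq_smul_of_hasDerivAt_log_det_trace_inv hSigT hSig.det_pos.ne' hRR hlR hSigstat, smul_smul,
      inv_mul_cancel₀ (by positivity), one_smul]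

/-- **Stationary points of the Gaussian log-likelihood of the SUR model satisfy the
iterated FGLS equations**: if both the derivative of `l` in `β` and the directional
derivative of `l` at `Σ` along every symmetric matrix vanish, then
`β = (Xᵀ(Σ⁻¹ ⊗ I_n)X)⁻¹ Xᵀ(Σ⁻¹ ⊗ I_n) y` and `Σ = (Y − X̃B)ᵀ(Y − X̃B)/n`. -/
theorem MLE_stationary_point_FGLS
    {n m : ℕ} (hm : 1 < m) (hn : 0 < n) {pdim : Fin m → ℕ}
    (X : Matrix (Fin n) (SURIdx m pdim) ℝ) (Y : Matrix (Fin n) (Fin m) ℝ)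
    -- the Gaussian log-likelihood
    (l : (SURIdx m pdim → ℝ) → Matrix (Fin m) (Fin m) ℝ → ℝ)
    (hl : ∀ (βv : SURIdx m pdim → ℝ) (Sm : Matrix (Fin m) (Fin m) ℝ),
      l βv Sm = -((m : ℝ) * (n : ℝ) / 2) * Real.log (2 * Real.pi)
        - ((n : ℝ) / 2) * Real.log Sm.det
        - (1 / 2) * (((fun r : Fin m × Fin n => Y r.2 r.1) - (bigXS X).mulVec βv) ⬝ᵥ
            ((Sm⁻¹ ⊗ₖ (1 : Matrix (Fin n) (Fin n) ℝ)).mulVec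
              ((fun r : Fin m × Fin n => Y r.2 r.1) - (bigXS X).mulVec βv))))
    -- the stationary point (β, Σ) with Σ symmetric positive definite
    (βv : SURIdx m pdim → ℝ) (Sig : Matrix (Fin m) (Fin m) ℝ) (hSig : Sig.PosDef)
    (hβstat : ∀ v : SURIdx m pdim → ℝ, HasDerivAt (fun t : ℝ => l (βv + t • v) Sig) 0 0)
    (hSigstat : ∀ V : Matrix (Fin m) (Fin m) ℝ, Vᵀ = V →
      HasDerivAt (fun t : ℝ => l βv (Sig + t • V)) 0 0)
    (hinv : IsUnit ((bigXS X)ᵀ * (Sig⁻¹ ⊗ₖ (1 : Matrix (Fin n) (Fin n) ℝ)) *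
      bigXS X).det) :
    βv = ((bigXS X)ᵀ * (Sig⁻¹ ⊗ₖ (1 : Matrix (Fin n) (Fin n) ℝ)) * bigXS X)⁻¹.mulVec
        (((bigXS X)ᵀ * (Sig⁻¹ ⊗ₖ (1 : Matrix (Fin n) (Fin n) ℝ))).mulVec
          fun r => Y r.2 r.1) ∧
      Sig = ((n : ℝ))⁻¹ • ((Matrix.of fun i j => resid X Y βv i j)ᵀ *
        Matrix.of fun i j => resid X Y βv i j) :=
  MLE_stationary_point_FGLS_general hn X Y l hl βv Sig hSig hβstat hSigstat hinv
end
end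

section
/- Gradient of the M-scale with respect to the regression coefficients, and its vanishing at the S-estimator (consistency condition, appendix). Let ρ₀ be a ρ-function, ψ₀ = ρ₀', w₀(u) = ψ₀(u)/u, 0 < δ₀ < ρ₀(c₀), fix a symmetric positive definite G ∈ ℝ^{m×m} and set φ(G⁻¹) = det(G⁻¹)^{−1/m} G⁻¹. Let b₀ ∈ ℝ^p and let s be a function, defined and differentiable on a neighborhood of b₀ with positive values, such that (1/n) Σ_{i=1}^n ρ₀(√(e_i(b)ᵀ φ(G⁻¹) e_i(b)) / s(b)) = δ₀ for all b in that neighborhood, where e_i(b) = ỹ_i − x_i b with ỹ_i ∈ ℝ^m the i-th rows of Y and x_i ∈ ℝ^{m×p} the block-diagonal arrangement of the i-th observation's regressors. Set d_i = √(e_i(b₀)ᵀ φ(G⁻¹) e_i(b₀))/s(b₀), assume d_i > 0 for all i and Σ_{i=1}^n ψ₀(d_i) d_i ≠ 0. Then the gradient of s at b₀ equals ∇s(b₀) = −(Σ_{i=1}^n w₀(d_i) x_iᵀ φ(G⁻¹) e_i(b₀)) / (s(b₀) Σ_{i=1}^n ψ₀(d_i) d_i). In particular, if the S estimating equation Σ_{i=1}^n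 w₀(d_i) x_iᵀ φ(G⁻¹) e_i(b₀) = 0 holds, then ∇s(b₀) = 0. -/
/-!
Implicit differentiation along lines. Restricted to the line `t ↦ b₀ + t • v`, the defining
equation says that `t ↦ Σᵢ ρ₀(√Qᵢ(t) / s(t))` is locally constant, where `Qᵢ` is the squared
Mahalanobis norm of the `i`-th residual. Differentiating at `t = 0` gives one linear equation
in the directional derivative of `s`, whose coefficient is `Σᵢ ψ₀(dᵢ) dᵢ / s(b₀)`; since
`φ(G⁻¹)` is symmetric, `Qᵢ'(0) = -2 (xᵢᵀ φ(G⁻¹) eᵢ(b₀)) ⬝ᵥ v`.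
-/

open Matrix

noncomputable section

open Filter Topology

theorem hasDerivAt_rho_sqrt_div {ρ r σ : ℝ → ℝ} {r' σ' x d : ℝ}
    (hρ : DifferentiableAt ℝ ρ d) (hr : HasDerivAt r r' x) (hσ : HasDerivAt σ σ' x)
    (hd : √(r x) / σ x = d) (hd0 : d ≠ 0) :
    HasDerivAt (fun t => ρ (√(r t) / σ t))
      (deriv ρ d * (r' / (2 * d * σ x ^ 2) - d * σ' / σ x)) x := by
  have hσx : σ x ≠ 0 := fun h => hd0 (by rw [← hd, h, div_zero])
  have hrx : r x ≠ 0 := fun h => hd0 (by rw [← hd, h, Real.sqrt_zero, zero_div])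
  have hsqrt : √(r x) = d * σ x := by rw [← hd, div_mul_cancel₀ _ hσx]
  have hcomp := (hd ▸ hρ.hasDerivAt).comp x ((hr.sqrt hrx).div hσ hσx)
  refine hcomp.congr_deriv ?_
  rw [hsqrt]
  field_simp

theorem hasDerivAt_residual_quadForm {κ μ : Type*} [Fintype κ] [Fintype μ]
    {M : Matrix κ κ ℝ} (hM : M.IsSymm) (X : Matrix κ μ ℝ) (y : κ → ℝ) (b v : μ → ℝ) :
    HasDerivAt (fun t : ℝ => (y - X *ᵥ (b + t • v)) ⬝ᵥ M *ᵥ (y - X *ᵥ (b + t • v)))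
      (-2 * ((Xᵀ *ᵥ (M *ᵥ (y - X *ᵥ b))) ⬝ᵥ v)) 0 := by
  set e := y - X *ᵥ b
  set u := X *ᵥ v
  have hsymm : u ⬝ᵥ M *ᵥ e = e ⬝ᵥ M *ᵥ u := by
    rw [dotProduct_mulVec, ← mulVec_transpose, hM.eq, dotProduct_comm]
  have hpoly : (fun t : ℝ => (y - X *ᵥ (b + t • v)) ⬝ᵥ M *ᵥ (y - X *ᵥ (b + t • v)))
      = fun t => e ⬝ᵥ M *ᵥ e - t * (2 * (e ⬝ᵥ M *ᵥ u)) + t ^ 2 * (u ⬝ᵥ M *ᵥ u) := by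
    funext t
    have hres : y - X *ᵥ (b + t • v) = e - t • u := by
      simp only [e, u, mulVec_add, mulVec_smul]; abel
    rw [hres]
    simp only [sub_dotProduct, dotProduct_sub, mulVec_sub, mulVec_smul, smul_dotProduct,
      dotProduct_smul, smul_eq_mul, hsymm]
    ring
  have hval : (Xᵀ *ᵥ (M *ᵥ e)) ⬝ᵥ v = e ⬝ᵥ M *ᵥ u := by
    rw [mulVec_transpose, ← dotProduct_mulVec, dotProduct_comm, ← hsymm]
  rw [hpoly, hval]
  have h := (((hasDerivAt_id' (0 : ℝ)).mul_const (2 * (e ⬝ᵥ M *ᵥ u))).const_sub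
    (e ⬝ᵥ M *ᵥ e)).fun_add ((hasDerivAt_pow 2 (0 : ℝ)).mul_const (u ⬝ᵥ M *ᵥ u))
  simpa using h

theorem scale_hasDerivAt_eq_of_sum_rho_const {ι : Type*} [Fintype ι] {ρ σ : ℝ → ℝ}
    {r : ι → ℝ → ℝ} {r' d : ι → ℝ} {σ' x C : ℝ}
    (hρ : ∀ i, DifferentiableAt ℝ ρ (d i)) (hr : ∀ i, HasDerivAt (r i) (r' i) x)
    (hσ : HasDerivAt σ σ' x) (hd : ∀ i, √(r i x) / σ x = d i) (hd0 : ∀ i, d i ≠ 0)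
    (hsum : ∑ i, deriv ρ (d i) * d i ≠ 0)
    (hconst : ∀ᶠ t in 𝓝 x, ∑ i, ρ (√(r i t) / σ t) = C) :
    σ' = 1 / (2 * σ x * ∑ i, deriv ρ (d i) * d i) * ∑ i, deriv ρ (d i) / d i * r' i := by
  obtain ⟨i₀, -, -⟩ := Finset.exists_ne_zero_of_sum_ne_zero hsum
  have hσx : σ x ≠ 0 := fun h => hd0 i₀ (by rw [← hd i₀, h, div_zero])
  have hderiv := HasDerivAt.fun_sum fun i (_ : i ∈ Finset.univ) =>
    hasDerivAt_rho_sqrt_div (hρ i) (hr i) hσ (hd i) (hd0 i)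
  have hzero := hderiv.unique ((hasDerivAt_const x C).congr_of_eventuallyEq hconst)
  have hsplit : ∑ i, deriv ρ (d i) * (r' i / (2 * d i * σ x ^ 2) - d i * σ' / σ x)
      = 1 / (2 * σ x ^ 2) * ∑ i, deriv ρ (d i) / d i * r' i
        - σ' / σ x * ∑ i, deriv ρ (d i) * d i := by
    rw [Finset.mul_sum, Finset.mul_sum, ← Finset.sum_sub_distrib]
    refine Finset.sum_congr rfl fun i _ => ?_
    field_simp [hd0 i]
  rw [hsplit] at hzero
  set W := ∑ i, deriv ρ (d i) / d i * r' i
  set S := ∑ i, deriv ρ (d i) * d i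
  field_simp at hzero ⊢
  linear_combination -hzero

theorem M_scale_gradient_in_b_general
    {n m : ℕ} {pdim : Fin m → ℕ}
    (ρ₀ : ℝ → ℝ) (c₀ : ℝ) (hρ₀ : IsRhoFunction ρ₀ c₀)
    (δ₀ : ℝ)
    (w₀ : ℝ → ℝ) (hw₀ : ∀ u : ℝ, u ≠ 0 → w₀ u = deriv ρ₀ u / u)
    -- the fixed shape matrix G and φ(G⁻¹) = det(G⁻¹)^{−1/m} G⁻¹
    (G : Matrix (Fin m) (Fin m) ℝ) (hG : G.PosDef)
    (φG : Matrix (Fin m) (Fin m) ℝ)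
    (hφG : φG = (G⁻¹.det ^ (-(1 : ℝ) / (m : ℝ))) • G⁻¹)
    -- the data: i-th response row and block-diagonal arrangement of the i-th regressors
    (yt : Fin n → Fin m → ℝ) (x : Fin n → Matrix (Fin m) (SURIdx m pdim) ℝ)
    -- the M-scale s, positive and differentiable near b₀, satisfying the defining
    -- equation on a neighborhood of b₀
    (b₀ : SURIdx m pdim → ℝ)
    (s : (SURIdx m pdim → ℝ) → ℝ)
    (U : Set (SURIdx m pdim → ℝ)) (hU : U ∈ nhds b₀)
    (hdiff : ∀ bb ∈ U, DifferentiableAt ℝ s bb)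
    (hcons : ∀ bb ∈ U,
      (1 / (n : ℝ)) * ∑ i, ρ₀ (Real.sqrt
        ((yt i - (x i).mulVec bb) ⬝ᵥ φG.mulVec (yt i - (x i).mulVec bb)) / s bb) = δ₀)
    -- the distances dᵢ, assumed positive, with nonvanishing Σᵢ ψ₀(dᵢ)dᵢ
    (d : Fin n → ℝ)
    (hd : ∀ i, d i = Real.sqrt
      ((yt i - (x i).mulVec b₀) ⬝ᵥ φG.mulVec (yt i - (x i).mulVec b₀)) / s b₀)
    (hdpos : ∀ i, 0 < d i)
    (hsum : ∑ i, deriv ρ₀ (d i) * d i ≠ 0) :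
    (∀ v : SURIdx m pdim → ℝ,
      fderiv ℝ s b₀ v = (-1 / (s b₀ * ∑ i, deriv ρ₀ (d i) * d i)) *
        ((∑ i, w₀ (d i) • ((x i)ᵀ.mulVec (φG.mulVec (yt i - (x i).mulVec b₀)))) ⬝ᵥ v)) ∧
    ((∑ i, w₀ (d i) • ((x i)ᵀ.mulVec (φG.mulVec (yt i - (x i).mulVec b₀)))) = 0 →
      fderiv ℝ s b₀ = 0) := by
  have hφG_symm : φG.IsSymm := hφG ▸ (isHermitian_iff_isSymm.1 hG.isHermitian).inv.smul _
  have hρ₀_diff : Differentiable ℝ ρ₀ := hρ₀.2.2.1.differentiable (by norm_num)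
  obtain ⟨i₀, -, -⟩ := Finset.exists_ne_zero_of_sum_ne_zero hsum
  have hn : (n : ℝ) ≠ 0 := Nat.cast_ne_zero.2 i₀.pos.ne'
  have hgrad : ∀ v : SURIdx m pdim → ℝ,
      fderiv ℝ s b₀ v = (-1 / (s b₀ * ∑ i, deriv ρ₀ (d i) * d i)) *
        ((∑ i, w₀ (d i) • ((x i)ᵀ.mulVec (φG.mulVec (yt i - (x i).mulVec b₀)))) ⬝ᵥ v) := by
    intro v
    have hline : ∀ᶠ t in 𝓝 (0 : ℝ), b₀ + t • v ∈ U :=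
      ((continuous_const.add (continuous_id.smul continuous_const)).tendsto' 0 b₀
        (by simp)).eventually_mem hU
    rw [scale_hasDerivAt_eq_of_sum_rho_const (C := n * δ₀) (fun i => hρ₀_diff.differentiableAt)
      (fun i => hasDerivAt_residual_quadForm hφG_symm (x i) (yt i) b₀ v)
      ((hdiff b₀ (mem_of_mem_nhds hU)).hasFDerivAt.hasLineDerivAt v)
      (fun i => by simp [hd i]) (fun i => (hdpos i).ne') hsum
      (hline.mono fun t ht => by rw [← hcons _ ht]; field_simp)]
    simp only [zero_smul, add_zero, sum_dotProduct, smul_dotProduct, smul_eq_mul,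
      fun i => hw₀ (d i) (hdpos i).ne', mul_left_comm _ (-2 : ℝ), ← Finset.mul_sum]
    field_simp
  refine ⟨hgrad, fun h0 => ContinuousLinearMap.ext fun v => ?_⟩
  rw [hgrad v, h0, zero_dotProduct, mul_zero, _root_.zero_apply]

/-- **Gradient of the M-scale with respect to the regression coefficients, and its
vanishing at the S-estimator** (consistency condition, appendix):
`∇s(b₀) = −(Σᵢ w₀(dᵢ) xᵢᵀ φ(G⁻¹) eᵢ(b₀)) / (s(b₀) Σᵢ ψ₀(dᵢ)dᵢ)`; in particular the
gradient vanishes when the S estimating equation holds. -/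
theorem M_scale_gradient_in_b
    {n m : ℕ} (hm : 1 < m) {pdim : Fin m → ℕ}
    (ρ₀ : ℝ → ℝ) (c₀ : ℝ) (hρ₀ : IsRhoFunction ρ₀ c₀)
    (δ₀ : ℝ) (hδ : 0 < δ₀ ∧ δ₀ < ρ₀ c₀)
    (w₀ : ℝ → ℝ) (hw₀ : ∀ u : ℝ, u ≠ 0 → w₀ u = deriv ρ₀ u / u)
    -- the fixed shape matrix G and φ(G⁻¹) = det(G⁻¹)^{−1/m} G⁻¹
    (G : Matrix (Fin m) (Fin m) ℝ) (hG : G.PosDef)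
    (φG : Matrix (Fin m) (Fin m) ℝ)
    (hφG : φG = (G⁻¹.det ^ (-(1 : ℝ) / (m : ℝ))) • G⁻¹)
    -- the data: i-th response row and block-diagonal arrangement of the i-th regressors
    (yt : Fin n → Fin m → ℝ) (x : Fin n → Matrix (Fin m) (SURIdx m pdim) ℝ)
    (hx : ∀ (i : Fin n) (j : Fin m) (q : SURIdx m pdim), q.1 ≠ j → x i j q = 0)
    -- the M-scale s, positive and differentiable near b₀, satisfying the defining
    -- equation on a neighborhood of b₀
    (b₀ : SURIdx m pdim → ℝ)
    (s : (SURIdx m pdim → ℝ) → ℝ)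
    (U : Set (SURIdx m pdim → ℝ)) (hU : U ∈ nhds b₀)
    (hpos : ∀ bb ∈ U, 0 < s bb)
    (hdiff : ∀ bb ∈ U, DifferentiableAt ℝ s bb)
    (hcons : ∀ bb ∈ U,
      (1 / (n : ℝ)) * ∑ i, ρ₀ (Real.sqrt
        ((yt i - (x i).mulVec bb) ⬝ᵥ φG.mulVec (yt i - (x i).mulVec bb)) / s bb) = δ₀)
    -- the distances dᵢ, assumed positive, with nonvanishing Σᵢ ψ₀(dᵢ)dᵢ
    (d : Fin n → ℝ)
    (hd : ∀ i, d i = Real.sqrt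
      ((yt i - (x i).mulVec b₀) ⬝ᵥ φG.mulVec (yt i - (x i).mulVec b₀)) / s b₀)
    (hdpos : ∀ i, 0 < d i)
    (hsum : ∑ i, deriv ρ₀ (d i) * d i ≠ 0) :
    (∀ v : SURIdx m pdim → ℝ,
      fderiv ℝ s b₀ v = (-1 / (s b₀ * ∑ i, deriv ρ₀ (d i) * d i)) *
        ((∑ i, w₀ (d i) • ((x i)ᵀ.mulVec (φG.mulVec (yt i - (x i).mulVec b₀)))) ⬝ᵥ v)) ∧
    ((∑ i, w₀ (d i) • ((x i)ᵀ.mulVec (φG.mulVec (yt i - (x i).mulVec b₀)))) = 0 →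
      fderiv ℝ s b₀ = 0) :=
  M_scale_gradient_in_b_general ρ₀ c₀ hρ₀ δ₀ w₀ hw₀ G hG φG hφG yt x b₀ s U hU hdiff hcons d hd
    hdpos hsum
end
end
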